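/- arXiv:2112.12018 — 6 statements merged into one kernel-verified Lean document; each statement's English description precedes it below -/
import Mathlib

section
/- Let X be a real separable Banach space, Y a real separable reflexive Banach space, and S : X → Y locally Lipschitz continuous. Let {xₙ} ⊂ X and {Gₙ} ⊂ L(X,Y) be sequences with xₙ → x in X for some x ∈ X, Gₙ ∈ ∂_B^{sw}S(xₙ) for all n, and Gₙ → G in the weak operator topology for some G ∈ L(X,Y). Then G ∈ ∂_B^{sw}S(x). -/
open Filter Topology MeasureTheory

noncomputable section

/-- `S` has the (one-sided) Gâteaux derivative `G` at `x`. -/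
def GateauxDerivAt {X Y : Type*} [NormedAddCommGroup X] [NormedSpace ℝ X]
    [NormedAddCommGroup Y] [NormedSpace ℝ Y] (S : X → Y) (G : X →L[ℝ] Y) (x : X) : Prop :=
  ∀ z : X, Tendsto (fun t : ℝ => (1 / t) • (S (x + t • z) - S x)) (𝓝[>] (0 : ℝ)) (𝓝 (G z))

/-- The set `D_S` of points at which `S` is Gâteaux differentiable. -/
def gateauxPoints {X Y : Type*} [NormedAddCommGroup X] [NormedSpace ℝ X]
    [NormedAddCommGroup Y] [NormedSpace ℝ Y] (S : X → Y) : Set X :=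
  {x | ∃ G : X →L[ℝ] Y, GateauxDerivAt S G x}

/-- Convergence of a sequence of operators in the weak operator topology:
`Gₙ z ⇀ G z` weakly in `Y` for every `z ∈ X`. -/
def WOTConv {X Y : Type*} [NormedAddCommGroup X] [NormedSpace ℝ X]
    [NormedAddCommGroup Y] [NormedSpace ℝ Y]
    (Gn : ℕ → X →L[ℝ] Y) (G : X →L[ℝ] Y) : Prop :=
  ∀ (z : X) (f : Y →L[ℝ] ℝ), Tendsto (fun n => f (Gn n z)) atTop (𝓝 (f (G z)))

/-- The strong-weak Bouligand differential of `S` at `x`: all WOT-limits of Gâteaux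
derivatives of `S` along sequences of Gâteaux points converging strongly to `x`. -/
def BouligandSW {X Y : Type*} [NormedAddCommGroup X] [NormedSpace ℝ X]
    [NormedAddCommGroup Y] [NormedSpace ℝ Y] (S : X → Y) (x : X) : Set (X →L[ℝ] Y) :=
  {G | ∃ (xn : ℕ → X) (Gn : ℕ → X →L[ℝ] Y),
    (∀ n, GateauxDerivAt S (Gn n) (xn n)) ∧
    Tendsto xn atTop (𝓝 x) ∧ WOTConv Gn G}

/-- Local Lipschitz continuity in the sense of the paper. -/
def LocLip {X Y : Type*} [NormedAddCommGroup X] [NormedAddCommGroup Y] (S : X → Y) : Prop :=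
  ∀ x : X, ∃ C ε : ℝ, 0 < C ∧ 0 < ε ∧
    ∀ x₁ x₂ : X, ‖x₁ - x‖ ≤ ε → ‖x₂ - x‖ ≤ ε → ‖S x₁ - S x₂‖ ≤ C * ‖x₁ - x₂‖

/-- A normed space is reflexive iff the canonical inclusion into the double dual is
surjective. -/
def IsReflexiveSpace (Y : Type*) [NormedAddCommGroup Y] [NormedSpace ℝ Y] : Prop :=
  Function.Surjective (NormedSpace.inclusionInDoubleDual ℝ Y)

section Aux
open TopologicalSpace NormedSpace

/-- If the dual of a normed space is separable, so is the space itself. -/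
lemma separable_of_dual_separable (E : Type*) [NormedAddCommGroup E] [NormedSpace ℝ E]
    [SeparableSpace (StrongDual ℝ E)] : SeparableSpace E := by
  obtain ⟨u, hu⟩ := TopologicalSpace.exists_dense_seq (StrongDual ℝ E)
  have hx : ∀ n : ℕ, ∃ x : E, ‖x‖ ≤ 1 ∧ ‖u n‖ / 3 ≤ ‖u n x‖ := by
    intro n
    rcases eq_or_ne (u n) 0 with h | h
    · exact ⟨0, by simp [h]⟩
    · have hpos : 0 < ‖u n‖ := norm_pos_iff.mpr h
      obtain ⟨x, hx1, hx2⟩ := (u n).exists_lt_apply_of_lt_opNorm (r := ‖u n‖ / 3) (by linarith)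
      exact ⟨x, hx1.le, hx2.le⟩
  choose xf hxf1 hxf2 using hx
  set M : Submodule ℝ E := Submodule.span ℝ (Set.range xf) with hM
  have hdense : Dense (M : Set E) := by
    by_contra hnd
    obtain ⟨y, hy⟩ : ∃ y : E, y ∉ closure (M : Set E) := by
      by_contra h
      push_neg at h
      exact hnd fun z => h z
    obtain ⟨f, c, hfc, hcy⟩ := geometric_hahn_banach_closed_point
      (Convex.closure M.convex) isClosed_closure hy
    have hf0 : ∀ a ∈ M, f a = 0 := by
      intro a ha
      by_contra hfa
      have hmem : ((c + 1) / f a) • a ∈ M := M.smul_mem _ ha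
      have := hfc _ (subset_closure hmem)
      rw [_root_.map_smul] at this
      simp only [smul_eq_mul] at this
      rw [div_mul_cancel₀ _ hfa] at this
      linarith
    have hc0 : (0:ℝ) < c := by
      have := hfc 0 (subset_closure M.zero_mem)
      simpa using this
    have hfne : f ≠ 0 := by
      intro h
      rw [h] at hcy
      simp at hcy
      linarith
    have hfpos : 0 < ‖f‖ := norm_pos_iff.mpr hfne
    obtain ⟨n, hn⟩ := Metric.denseRange_iff.mp hu f (‖f‖ / 4) (by linarith)
    rw [dist_comm, dist_eq_norm] at hn
    have hun : (3/4) * ‖f‖ ≤ ‖u n‖ := by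
      have := norm_sub_norm_le (u n) f
      have h2 : ‖f‖ - ‖u n‖ ≤ ‖u n - f‖ := by
        have := norm_sub_norm_le f (u n)
        rwa [norm_sub_rev] at this
      linarith
    have hxM : xf n ∈ M := Submodule.subset_span ⟨n, rfl⟩
    have heq : u n (xf n) = (u n - f) (xf n) := by
      simp [hf0 _ hxM]
    have hle : ‖u n (xf n)‖ ≤ ‖u n - f‖ := by
      rw [heq]
      calc ‖(u n - f) (xf n)‖ ≤ ‖u n - f‖ * ‖xf n‖ := (u n - f).le_opNorm _
        _ ≤ ‖u n - f‖ * 1 := by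
            exact mul_le_mul_of_nonneg_left (hxf1 n) (norm_nonneg _)
        _ = ‖u n - f‖ := mul_one _
    have := hxf2 n
    linarith
  have hsep : IsSeparable (M : Set E) :=
    (Set.countable_range xf).isSeparable.span
  have : IsSeparable (Set.univ : Set E) := by
    have := hsep.closure
    rwa [hdense.closure_eq] at this
  exact isSeparable_univ_iff.mp this

lemma dual_separable_of_reflexive (Y : Type*) [NormedAddCommGroup Y] [NormedSpace ℝ Y]
    [TopologicalSpace.SeparableSpace Y]
    (hY : Function.Surjective (NormedSpace.inclusionInDoubleDual ℝ Y)) :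
    TopologicalSpace.SeparableSpace (StrongDual ℝ Y) := by
  have : TopologicalSpace.SeparableSpace (StrongDual ℝ (StrongDual ℝ Y)) :=
    hY.denseRange.separableSpace (NormedSpace.inclusionInDoubleDual ℝ Y).continuous
  exact separable_of_dual_separable (StrongDual ℝ Y)

/-- Norm bound on a Gâteaux derivative from a Lipschitz bound on a ball. -/
lemma gateaux_norm_le {X Y : Type*} [NormedAddCommGroup X] [NormedSpace ℝ X]
    [NormedAddCommGroup Y] [NormedSpace ℝ Y] {S : X → Y} {H : X →L[ℝ] Y} {w : X}
    {C δ : ℝ} (hC : 0 ≤ C) (hδ : 0 < δ)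
    (hLip : ∀ x₁ x₂ : X, ‖x₁ - w‖ ≤ δ → ‖x₂ - w‖ ≤ δ → ‖S x₁ - S x₂‖ ≤ C * ‖x₁ - x₂‖)
    (hH : GateauxDerivAt S H w) (z : X) : ‖H z‖ ≤ C * ‖z‖ := by
  rcases eq_or_ne z 0 with rfl | hz
  · simp
  have hznorm : 0 < ‖z‖ := norm_pos_iff.mpr hz
  have hbd : ∀ᶠ t : ℝ in 𝓝[>] 0, ‖(1 / t) • (S (w + t • z) - S w)‖ ≤ C * ‖z‖ := by
    have hmem : Set.Ioo (0:ℝ) (δ / ‖z‖) ∈ 𝓝[>] (0:ℝ) :=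
      Ioo_mem_nhdsGT_of_mem ⟨le_refl 0, div_pos hδ hznorm⟩
    filter_upwards [hmem] with t ht
    have ht0 : 0 < t := ht.1
    have htz : ‖t • z‖ ≤ δ := by
      rw [norm_smul, Real.norm_eq_abs, abs_of_pos ht0]
      calc t * ‖z‖ ≤ (δ / ‖z‖) * ‖z‖ :=
            mul_le_mul_of_nonneg_right ht.2.le (norm_nonneg z)
        _ = δ := div_mul_cancel₀ _ hznorm.ne'
    have h1 : ‖(w + t • z) - w‖ ≤ δ := by simpa using htz
    have := hLip (w + t • z) w h1 (by simp [hδ.le])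
    rw [norm_smul, Real.norm_eq_abs, abs_of_pos (by positivity : (0:ℝ) < 1/t)]
    have h2 : ‖(w + t • z) - w‖ = t * ‖z‖ := by
      simp [norm_smul, abs_of_pos ht0]
    rw [h2] at this
    calc (1/t) * ‖S (w + t • z) - S w‖ ≤ (1/t) * (C * (t * ‖z‖)) :=
          mul_le_mul_of_nonneg_left this (by positivity)
      _ = C * ‖z‖ := by field_simp
  exact le_of_tendsto ((hH z).norm) hbd

end Aux

set_option maxHeartbeats 1000000

/-- Upper semicontinuity of the strong-weak Bouligand differential:
if `xₙ → x` strongly, `Gₙ ∈ ∂_B^{sw}S(xₙ)` and `Gₙ → G` in the weak operator topology,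
then `G ∈ ∂_B^{sw}S(x)`. -/
theorem bouligandSW_upper_semicontinuous
    {X Y : Type*} [NormedAddCommGroup X] [NormedSpace ℝ X] [CompleteSpace X]
    [TopologicalSpace.SeparableSpace X]
    [NormedAddCommGroup Y] [NormedSpace ℝ Y] [CompleteSpace Y]
    [TopologicalSpace.SeparableSpace Y] (hY : IsReflexiveSpace Y)
    (S : X → Y) (hS : LocLip S)
    (xn : ℕ → X) (Gn : ℕ → X →L[ℝ] Y) (x : X) (G : X →L[ℝ] Y)
    (hx : Tendsto xn atTop (𝓝 x))
    (hGn : ∀ n, Gn n ∈ BouligandSW S (xn n))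
    (hG : WOTConv Gn G) :
    G ∈ BouligandSW S x := by
  haveI : TopologicalSpace.SeparableSpace (StrongDual ℝ Y) :=
    dual_separable_of_reflexive Y hY
  obtain ⟨zs, hzs⟩ := TopologicalSpace.exists_dense_seq X
  obtain ⟨fs, hfs⟩ := TopologicalSpace.exists_dense_seq (StrongDual ℝ Y)
  -- Diagonal selection
  have key : ∀ n : ℕ, ∃ (w : X) (H : X →L[ℝ] Y), GateauxDerivAt S H w ∧
      ‖w - xn n‖ < 1 / (n + 1) ∧
      ∀ i ∈ Finset.range (n + 1), ∀ j ∈ Finset.range (n + 1),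
        |fs i (H (zs j)) - fs i (Gn n (zs j))| < 1 / (n + 1) := by
    intro n
    obtain ⟨yk, Hk, hder, hyk, hwot⟩ := hGn n
    have hpos : (0:ℝ) < 1 / (n + 1) := by positivity
    have E1 : ∀ᶠ k in atTop, ‖yk k - xn n‖ < 1 / (n + 1) := by
      have := Metric.tendsto_nhds.mp hyk _ hpos
      filter_upwards [this] with k hk
      rwa [dist_eq_norm] at hk
    have E2 : ∀ᶠ k in atTop, ∀ i ∈ Finset.range (n + 1), ∀ j ∈ Finset.range (n + 1),
        |fs i (Hk k (zs j)) - fs i (Gn n (zs j))| < 1 / (n + 1) := by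
      rw [Filter.eventually_all_finset]
      intro i _
      rw [Filter.eventually_all_finset]
      intro j _
      have := Metric.tendsto_nhds.mp (hwot (zs j) (fs i)) _ hpos
      filter_upwards [this] with k hk
      rwa [Real.dist_eq] at hk
    obtain ⟨k, hk1, hk2⟩ := (E1.and E2).exists
    exact ⟨yk k, Hk k, hder k, hk1, hk2⟩
  choose w H hder hwx hHG using key
  refine ⟨w, H, hder, ?_, ?_⟩
  · -- w → x
    rw [tendsto_iff_dist_tendsto_zero]
    apply squeeze_zero (fun n => dist_nonneg)
      (g := fun n : ℕ => 1 / (n + 1) + dist (xn n) x)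
    · intro n
      calc dist (w n) x ≤ dist (w n) (xn n) + dist (xn n) x := dist_triangle _ _ _
        _ ≤ 1 / (n + 1) + dist (xn n) x := by
            rw [dist_eq_norm]; exact add_le_add_left (hwx n).le _
    · have h1 : Tendsto (fun n : ℕ => 1 / ((n:ℝ) + 1)) atTop (𝓝 0) :=
        tendsto_one_div_add_atTop_nhds_zero_nat
      have h2 := tendsto_iff_dist_tendsto_zero.mp hx
      simpa using h1.add h2
  · -- WOT convergence
    intro z f
    obtain ⟨C, δ, hC, hδ, hLip⟩ := hS x
    rw [Metric.tendsto_atTop]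
    intro ε hε
    set B : ℝ := C + ‖G‖ with hB
    have hBpos : 0 < B := by positivity
    -- choose z_j close to z
    have hdz : 0 < min 1 (ε / (4 * (‖f‖ + 1) * (B + 1))) := by positivity
    obtain ⟨j, hj⟩ := Metric.denseRange_iff.mp hzs z _ hdz
    have hdf : 0 < ε / (4 * (B + 1) * (‖z‖ + 2)) := by positivity
    obtain ⟨i, hi⟩ := Metric.denseRange_iff.mp hfs f _ hdf
    rw [dist_eq_norm] at hj hi
    have hzj : ‖z - zs j‖ < min 1 (ε / (4 * (‖f‖ + 1) * (B + 1))) := hj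
    have hfi : ‖f - fs i‖ < ε / (4 * (B + 1) * (‖z‖ + 2)) := hi
    have hzsj_norm : ‖zs j‖ ≤ ‖z‖ + 1 := by
      have := norm_sub_norm_le z (zs j)
      have h1 : ‖z - zs j‖ < 1 := lt_of_lt_of_le hzj (min_le_left _ _)
      have := norm_le_norm_add_norm_sub' (zs j) z
      -- ‖zs j‖ ≤ ‖z‖ + ‖zs j - z‖
      rw [norm_sub_rev] at h1
      linarith [norm_le_insert' z (zs j)]
    -- eventual hypotheses
    have Ev1 : ∀ᶠ n in atTop, ‖xn n - x‖ ≤ δ / 4 := by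
      have := Metric.tendsto_nhds.mp hx (δ/4) (by positivity)
      filter_upwards [this] with n hn
      rw [dist_eq_norm] at hn; exact hn.le
    have Ev2 : ∀ᶠ n : ℕ in atTop, (1:ℝ) / (n + 1) < min (ε/4) (δ/4) := by
      have h1 : Tendsto (fun n : ℕ => 1 / ((n:ℝ) + 1)) atTop (𝓝 0) :=
        tendsto_one_div_add_atTop_nhds_zero_nat
      have := Metric.tendsto_nhds.mp h1 _ (by positivity : (0:ℝ) < min (ε/4) (δ/4))
      filter_upwards [this] with n hn
      rw [Real.dist_eq, sub_zero] at hn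
      calc (1:ℝ)/(n+1) ≤ |1/((n:ℝ)+1)| := le_abs_self _
        _ < _ := hn
    have Ev3 : ∀ᶠ n in atTop, |fs i (Gn n (zs j)) - fs i (G (zs j))| < ε / 4 := by
      have := Metric.tendsto_nhds.mp (hG (zs j) (fs i)) (ε/4) (by positivity)
      filter_upwards [this] with n hn
      rwa [Real.dist_eq] at hn
    have Ev4 : ∀ᶠ n in atTop, n ≥ max i j := eventually_ge_atTop _
    obtain ⟨N, hN⟩ := Filter.eventually_atTop.mp (((Ev1.and Ev2).and (Ev3.and Ev4)))
    refine ⟨N, fun n hn => ?_⟩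
    obtain ⟨⟨h1, h2⟩, h3, h4⟩ := hN n hn
    -- derivative bound at w n
    have hwn : ‖w n - x‖ ≤ δ / 2 := by
      have := hwx n
      have h5 : (1:ℝ)/(n+1) < δ/4 := lt_of_lt_of_le h2 (min_le_right _ _)
      calc ‖w n - x‖ ≤ ‖w n - xn n‖ + ‖xn n - x‖ := norm_sub_le_norm_sub_add_norm_sub _ _ _
        _ ≤ δ/4 + δ/4 := add_le_add (by linarith) h1
        _ = δ/2 := by ring
    have hbound : ∀ z' : X, ‖H n z'‖ ≤ C * ‖z'‖ := by
      apply gateaux_norm_le hC.le (by positivity : (0:ℝ) < δ/2) _ (hder n)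
      intro x₁ x₂ hx₁ hx₂
      apply hLip
      · calc ‖x₁ - x‖ ≤ ‖x₁ - w n‖ + ‖w n - x‖ := norm_sub_le_norm_sub_add_norm_sub _ _ _
          _ ≤ δ/2 + δ/2 := add_le_add hx₁ hwn
          _ = δ := by ring
      · calc ‖x₂ - x‖ ≤ ‖x₂ - w n‖ + ‖w n - x‖ := norm_sub_le_norm_sub_add_norm_sub _ _ _
          _ ≤ δ/2 + δ/2 := add_le_add hx₂ hwn
          _ = δ := by ring
    -- the six-term estimate
    have hij : |fs i (H n (zs j)) - fs i (Gn n (zs j))| < 1 / (n + 1) := by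
      apply hHG n i (Finset.mem_range.mpr (Nat.lt_succ_of_le (le_trans (le_max_left i j) h4)))
        j (Finset.mem_range.mpr (Nat.lt_succ_of_le (le_trans (le_max_right i j) h4)))
    rw [Real.dist_eq]
    set dz : ℝ := ‖z - zs j‖ with hdzdef
    set df : ℝ := ‖f - fs i‖ with hdfdef
    have T1 : |f (H n z) - f (H n (zs j))| ≤ ‖f‖ * (C * dz) := by
      calc |f (H n z) - f (H n (zs j))| = |f (H n z - H n (zs j))| := by rw [map_sub]
        _ ≤ ‖f‖ * ‖H n z - H n (zs j)‖ := (f).le_opNorm _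
        _ = ‖f‖ * ‖H n (z - zs j)‖ := by rw [map_sub]
        _ ≤ ‖f‖ * (C * dz) := by
            exact mul_le_mul_of_nonneg_left (hbound _) (norm_nonneg f)
    have T2 : |f (H n (zs j)) - fs i (H n (zs j))| ≤ df * (C * ‖zs j‖) := by
      calc |f (H n (zs j)) - fs i (H n (zs j))| = |(f - fs i) (H n (zs j))| := by
            simp [ContinuousLinearMap.sub_apply]
        _ ≤ ‖f - fs i‖ * ‖H n (zs j)‖ := (f - fs i).le_opNorm _
        _ ≤ df * (C * ‖zs j‖) := mul_le_mul_of_nonneg_left (hbound _) (norm_nonneg _)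
    have T5 : |fs i (G (zs j)) - f (G (zs j))| ≤ df * (‖G‖ * ‖zs j‖) := by
      calc |fs i (G (zs j)) - f (G (zs j))| = |(f - fs i) (G (zs j))| := by
            rw [ContinuousLinearMap.sub_apply, abs_sub_comm]
        _ ≤ ‖f - fs i‖ * ‖G (zs j)‖ := (f - fs i).le_opNorm _
        _ ≤ df * (‖G‖ * ‖zs j‖) :=
            mul_le_mul_of_nonneg_left (G.le_opNorm _) (norm_nonneg _)
    have T6 : |f (G (zs j)) - f (G z)| ≤ ‖f‖ * (‖G‖ * dz) := by
      calc |f (G (zs j)) - f (G z)| = |f (G (zs j) - G z)| := by rw [map_sub]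
        _ ≤ ‖f‖ * ‖G (zs j) - G z‖ := (f).le_opNorm _
        _ = ‖f‖ * ‖G (zs j - z)‖ := by rw [map_sub]
        _ ≤ ‖f‖ * (‖G‖ * ‖zs j - z‖) :=
            mul_le_mul_of_nonneg_left (G.le_opNorm _) (norm_nonneg f)
        _ = ‖f‖ * (‖G‖ * dz) := by rw [norm_sub_rev]
    have habs : |f (H n z) - f (G z)| ≤
        |f (H n z) - f (H n (zs j))| + |f (H n (zs j)) - fs i (H n (zs j))|
        + |fs i (H n (zs j)) - fs i (Gn n (zs j))| + |fs i (Gn n (zs j)) - fs i (G (zs j))|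
        + |fs i (G (zs j)) - f (G (zs j))| + |f (G (zs j)) - f (G z)| := by
      have := abs_sub_le (f (H n z)) (f (H n (zs j))) (f (G z))
      calc |f (H n z) - f (G z)|
          ≤ |f (H n z) - f (H n (zs j))| + |f (H n (zs j)) - f (G z)| :=
            abs_sub_le _ _ _
        _ ≤ |f (H n z) - f (H n (zs j))| + (|f (H n (zs j)) - fs i (H n (zs j))|
            + |fs i (H n (zs j)) - f (G z)|) := by
            linarith [abs_sub_le (f (H n (zs j))) (fs i (H n (zs j))) (f (G z))]
        _ ≤ _ := by
            have a1 := abs_sub_le (fs i (H n (zs j))) (fs i (Gn n (zs j))) (f (G z))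
            have a2 := abs_sub_le (fs i (Gn n (zs j))) (fs i (G (zs j))) (f (G z))
            have a3 := abs_sub_le (fs i (G (zs j))) (f (G (zs j))) (f (G z))
            linarith
    -- numeric bounds
    have hdz1 : dz < 1 := lt_of_lt_of_le hzj (min_le_left _ _)
    have hdz2 : dz < ε / (4 * (‖f‖ + 1) * (B + 1)) :=
      lt_of_lt_of_le hzj (min_le_right _ _)
    have hdznn : 0 ≤ dz := norm_nonneg _
    have hdfnn : 0 ≤ df := norm_nonneg _
    have hfnn : 0 ≤ ‖f‖ := norm_nonneg _
    have hGnn : 0 ≤ ‖G‖ := norm_nonneg _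
    have hznn : 0 ≤ ‖z‖ := norm_nonneg _
    have e2 : (‖f‖ * B) * dz ≤ ((‖f‖ + 1) * (B + 1)) * dz :=
      mul_le_mul_of_nonneg_right (by nlinarith) hdznn
    have e3 : ((‖f‖ + 1) * (B + 1)) * dz
        ≤ ((‖f‖ + 1) * (B + 1)) * (ε / (4 * (‖f‖ + 1) * (B + 1))) :=
      mul_le_mul_of_nonneg_left hdz2.le (by positivity)
    have e4 : ((‖f‖ + 1) * (B + 1)) * (ε / (4 * (‖f‖ + 1) * (B + 1))) = ε / 4 := by
      field_simp
    have Q1 : ‖f‖ * (C * dz) + ‖f‖ * (‖G‖ * dz) ≤ ε / 4 := by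
      have e1 : ‖f‖ * (C * dz) + ‖f‖ * (‖G‖ * dz) = (‖f‖ * B) * dz := by rw [hB]; ring
      rw [e1]
      exact le_trans e2 (le_trans e3 (le_of_eq e4))
    have g2 : df * (C * ‖zs j‖) + df * (‖G‖ * ‖zs j‖) = df * (B * ‖zs j‖) := by
      rw [hB]; ring
    have g3 : df * (B * ‖zs j‖) ≤ df * ((B + 1) * (‖z‖ + 2)) := by
      apply mul_le_mul_of_nonneg_left _ hdfnn
      nlinarith [norm_nonneg (zs j)]
    have g4 : df * ((B + 1) * (‖z‖ + 2))
        ≤ (ε / (4 * (B + 1) * (‖z‖ + 2))) * ((B + 1) * (‖z‖ + 2)) :=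
      mul_le_mul_of_nonneg_right hfi.le (by positivity)
    have g5 : (ε / (4 * (B + 1) * (‖z‖ + 2))) * ((B + 1) * (‖z‖ + 2)) = ε / 4 := by
      field_simp
    have Q2 : df * (C * ‖zs j‖) + df * (‖G‖ * ‖zs j‖) ≤ ε / 4 := by
      rw [g2]
      exact le_trans g3 (le_trans g4 (le_of_eq g5))
    have h9 : (1:ℝ)/(n+1) < ε/4 := lt_of_lt_of_le h2 (min_le_left _ _)
    linarith [T1, T2, hij, h3, T5, T6, habs]
end
end

section
/- Let (Ω,Σ,μ) be a complete measure space, X a real separable Banach space, Y a real separable reflexive Banach space with an injective, continuous and compact linear embedding into L^q(Ω) for some fixed q ∈ [1,∞] (elements of Y being identified with their images in L^q(Ω)), and let S : X → Y be locally Lipschitz continuous and pointwise-a.e. convex. Then for every x ∈ X, every G ∈ ∂_B^{sw}S(x), and every z ∈ X, the inequality S(x+z) − S(x) ≥ Gz holds μ-almost everywhere in Ω. -/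
open Filter Topology MeasureTheory ENNReal NNReal

noncomputable section

/-- Pointwise-a.e. convexity of `S : X → Y` when `Y` is embedded into `L^q(μ)` via `ι`. -/
def PtwiseAEConvex {Ω : Type*} [MeasurableSpace Ω] {μ : Measure Ω} {q : ℝ≥0∞} [Fact (1 ≤ q)]
    {X Y : Type*} [NormedAddCommGroup X] [NormedSpace ℝ X]
    [NormedAddCommGroup Y] [NormedSpace ℝ Y]
    (ι : Y →L[ℝ] Lp ℝ q μ) (S : X → Y) : Prop :=
  ∀ (x₁ x₂ : X) (l : ℝ), 0 ≤ l → l ≤ 1 →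
    ∀ᵐ ω ∂μ, (ι (S (l • x₁ + (1 - l) • x₂)) : Ω → ℝ) ω ≤
      l * (ι (S x₁) : Ω → ℝ) ω + (1 - l) * (ι (S x₂) : Ω → ℝ) ω

section Aux

variable {Ω : Type*} [MeasurableSpace Ω] {μ : Measure Ω} {q : ℝ≥0∞} [Fact (1 ≤ q)]
  {X Y : Type*} [NormedAddCommGroup X] [NormedSpace ℝ X]
  [NormedAddCommGroup Y] [NormedSpace ℝ Y]

/-- Locally Lipschitz maps send convergent sequences to convergent sequences. -/
lemma LocLip.tendsto_of_tendsto {S : X → Y} (hS : LocLip S) {w : X} {xn : ℕ → X}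
    (hxn : Tendsto xn atTop (𝓝 w)) : Tendsto (fun n => S (xn n)) atTop (𝓝 (S w)) := by
  obtain ⟨C, ε, hC, hε, hlip⟩ := hS w
  rw [tendsto_iff_norm_sub_tendsto_zero] at hxn ⊢
  have hev : ∀ᶠ n in atTop, ‖S (xn n) - S w‖ ≤ C * ‖xn n - w‖ := by
    filter_upwards [hxn.eventually_le_const hε] with n hn
    exact hlip _ _ hn (by simpa using hε.le)
  have hbd : Tendsto (fun n => C * ‖xn n - w‖) atTop (𝓝 0) := by
    simpa using hxn.const_mul C
  exact squeeze_zero' (Eventually.of_forall fun n => norm_nonneg _) hev hbd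

/-- Key step: at a Gâteaux point, the derivative is an a.e. subgradient. -/
lemma gateaux_subgradient (ι : Y →L[ℝ] Lp ℝ q μ) (S : X → Y) (hconv : PtwiseAEConvex ι S)
    {w : X} {H : X →L[ℝ] Y} (hH : GateauxDerivAt S H w) (z : X) :
    ι (H z) ≤ ι (S (w + z)) - ι (S w) := by
  have htend : Tendsto (fun t : ℝ => ι ((1 / t) • (S (w + t • z) - S w))) (𝓝[>] (0 : ℝ))
      (𝓝 (ι (H z))) := (ι.continuous.tendsto _).comp (hH z)
  refine le_of_tendsto htend ?_
  have hmem : Set.Ioo (0 : ℝ) 1 ∈ 𝓝[>] (0 : ℝ) :=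
    Ioo_mem_nhdsGT_of_mem ⟨le_refl _, one_pos⟩
  filter_upwards [hmem] with t ht
  have hconv' := hconv (w + z) w t ht.1.le ht.2.le
  have hrw : t • (w + z) + (1 - t) • w = w + t • z := by module
  rw [hrw] at hconv'
  rw [← Lp.coeFn_le]
  have h1 : (ι ((1 / t) • (S (w + t • z) - S w)) : Ω → ℝ) =ᵐ[μ]
      fun ω => (1 / t) * ((ι (S (w + t • z)) : Ω → ℝ) ω - (ι (S w) : Ω → ℝ) ω) := by
    have e : ι ((1 / t) • (S (w + t • z) - S w)) =
        (1 / t) • (ι (S (w + t • z)) - ι (S w)) := by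
      rw [_root_.map_smul, map_sub]
    rw [e]
    filter_upwards [Lp.coeFn_smul ((1 : ℝ) / t) (ι (S (w + t • z)) - ι (S w)),
      Lp.coeFn_sub (ι (S (w + t • z))) (ι (S w))] with ω h₁ h₂
    rw [h₁, Pi.smul_apply, h₂, Pi.sub_apply, smul_eq_mul]
  have h2 : (↑(ι (S (w + z)) - ι (S w)) : Ω → ℝ) =ᵐ[μ]
      fun ω => (ι (S (w + z)) : Ω → ℝ) ω - (ι (S w) : Ω → ℝ) ω :=
    Lp.coeFn_sub _ _
  filter_upwards [h1, h2, hconv'] with ω h1ω h2ω hcω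
  rw [h1ω, h2ω]
  have ht' := ht.1
  rw [div_mul_eq_mul_div, one_mul, div_le_iff₀ ht']
  nlinarith

/-- A weak limit of a sequence of nonnegative elements of `Lp` is nonnegative. -/
lemma weak_limit_nonneg {c : ℕ → Lp ℝ q μ} {p : Lp ℝ q μ}
    (hpos : ∀ n, 0 ≤ c n)
    (hweak : ∀ f : Lp ℝ q μ →L[ℝ] ℝ, Tendsto (fun n => f (c n)) atTop (𝓝 (f p))) :
    0 ≤ p := by
  by_contra hp
  have hCconv : Convex ℝ {u : Lp ℝ q μ | 0 ≤ u} := by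
    intro u hu v hv a b ha hb _
    rw [Set.mem_setOf_eq, ← Lp.coeFn_nonneg] at hu hv ⊢
    filter_upwards [hu, hv, Lp.coeFn_add (a • u) (b • v), Lp.coeFn_smul a u,
      Lp.coeFn_smul b v] with ω h₁ h₂ h₃ h₄ h₅
    have : ((a • u + b • v : Lp ℝ q μ) : Ω → ℝ) ω = a * u ω + b * v ω := by
      rw [h₃]; simp [h₄, h₅]
    rw [Pi.zero_apply, this]
    have h₁' : (0:ℝ) ≤ u ω := by simpa using h₁
    have h₂' : (0:ℝ) ≤ v ω := by simpa using h₂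
    positivity
  have hCclosed : IsClosed {u : Lp ℝ q μ | 0 ≤ u} := isClosed_Ici (a := (0 : Lp ℝ q μ))
  obtain ⟨f, u, hfu, hup⟩ := geometric_hahn_banach_closed_point hCconv hCclosed hp
  have hle : f p ≤ u := le_of_tendsto (hweak f)
    (Eventually.of_forall fun n => (hfu _ (hpos n)).le)
  exact absurd hle (not_le.mpr hup)

end Aux

/-- For a locally Lipschitz, pointwise-a.e. convex map `S : X → Y` into a
separable reflexive space `Y` compactly embedded into `L^q(μ)`, every element `G` of the
strong-weak Bouligand differential satisfies `S(x+z) - S(x) ≥ G z` μ-a.e. -/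
theorem bouligandSW_subgradient_ae
    {Ω : Type*} [MeasurableSpace Ω] (μ : Measure Ω) (hμc : μ.IsComplete)
    (q : ℝ≥0∞) [Fact (1 ≤ q)]
    {X Y : Type*} [NormedAddCommGroup X] [NormedSpace ℝ X] [CompleteSpace X]
    [TopologicalSpace.SeparableSpace X]
    [NormedAddCommGroup Y] [NormedSpace ℝ Y] [CompleteSpace Y]
    [TopologicalSpace.SeparableSpace Y] (hY : IsReflexiveSpace Y)
    (ι : Y →L[ℝ] Lp ℝ q μ) (hι_inj : Function.Injective ι)
    (hι_cpt : IsCompactOperator ι)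
    (S : X → Y) (hS : LocLip S) (hconv : PtwiseAEConvex ι S)
    (x : X) (G : X →L[ℝ] Y) (hG : G ∈ BouligandSW S x) (z : X) :
    ∀ᵐ ω ∂μ, (ι (G z) : Ω → ℝ) ω ≤ (ι (S (x + z)) : Ω → ℝ) ω - (ι (S x) : Ω → ℝ) ω := by
  obtain ⟨xn, Gn, hderiv, hxn, hwot⟩ := hG
  -- a.e. subgradient inequality at each Gâteaux point
  have hkey : ∀ n, ι (Gn n z) ≤ ι (S (xn n + z)) - ι (S (xn n)) := fun n =>
    gateaux_subgradient ι S hconv (hderiv n) z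
  set c : ℕ → Lp ℝ q μ := fun n => (ι (S (xn n + z)) - ι (S (xn n))) - ι (Gn n z) with hc
  set p : Lp ℝ q μ := (ι (S (x + z)) - ι (S x)) - ι (G z) with hpdef
  have hpos : ∀ n, 0 ≤ c n := fun n => sub_nonneg.mpr (hkey n)
  -- strong convergence of the difference part
  have hS1 : Tendsto (fun n => S (xn n + z)) atTop (𝓝 (S (x + z))) :=
    hS.tendsto_of_tendsto (by simpa using hxn.add_const z)
  have hS2 : Tendsto (fun n => S (xn n)) atTop (𝓝 (S x)) := hS.tendsto_of_tendsto hxn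
  have hb : Tendsto (fun n => ι (S (xn n + z)) - ι (S (xn n))) atTop
      (𝓝 (ι (S (x + z)) - ι (S x))) :=
    (((ι.continuous.tendsto _).comp hS1).sub ((ι.continuous.tendsto _).comp hS2))
  have hweak : ∀ f : Lp ℝ q μ →L[ℝ] ℝ, Tendsto (fun n => f (c n)) atTop (𝓝 (f p)) := by
    intro f
    have h1 : Tendsto (fun n => f (ι (S (xn n + z)) - ι (S (xn n)))) atTop
        (𝓝 (f (ι (S (x + z)) - ι (S x)))) := (f.continuous.tendsto _).comp hb
    have h2 : Tendsto (fun n => f (ι (Gn n z))) atTop (𝓝 (f (ι (G z)))) := hwot z (f.comp ι)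
    simpa [hc, hpdef, map_sub] using h1.sub h2
  have hfinal : 0 ≤ p := weak_limit_nonneg hpos hweak
  have hle : ι (G z) ≤ ι (S (x + z)) - ι (S x) := sub_nonneg.mp hfinal
  rw [← Lp.coeFn_le] at hle
  filter_upwards [hle, Lp.coeFn_sub (ι (S (x + z))) (ι (S x))] with ω h₁ h₂
  rw [h₂] at h₁
  simpa using h₁
end
end

section
/- Let (Ω,Σ,μ) be a complete measure space, X a real separable Banach space, Y a real separable reflexive Banach space with an injective, continuous and compact linear embedding into L^q(Ω) for some fixed q ∈ [1,∞], and U a real reflexive Banach space with an injective, continuous and compact linear embedding into X. Let S : X → Y be pointwise-a.e. convex and locally Lipschitz with exponent r ∈ [1,∞], i.e., for all x ∈ X there exist C, ε > 0 with ‖S(x₁) − S(x₂)‖_Y ≤ C‖x₁ − x₂‖_X for all x₁, x₂ with ‖x_i − x‖_X ≤ ε, and ‖S(x₁+z) − S(x₁)‖_{L^r(Ω)} ≤ C‖z‖_U for all x₁ ∈ X and z ∈ U with ‖x₁ − x‖_X ≤ ε and ‖z‖_U ≤ ε. Then for every x ∈ X there exist constants C, δ > 0 such that ‖Gz‖_{L^r(Ω)}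 ≤ C‖z‖_U for all z ∈ U, all v ∈ X with ‖v − x‖_X ≤ δ, and all G ∈ ∂_B^{sw}S(v). -/
open Filter Topology MeasureTheory ENNReal NNReal

noncomputable section

/-- Local Lipschitz continuity of `S` in the sense of Assumption 2.1(v) of the paper:
around every point, `S` is Lipschitz from `X` to `Y` and, in addition, Lipschitz from
`U`-perturbations into `L^r(μ)` (via the embeddings `j : U ↪ X` and `ι : Y ↪ L^q(μ)`). -/
def LocLipWith {Ω : Type*} [MeasurableSpace Ω] {μ : Measure Ω} {q : ℝ≥0∞} [Fact (1 ≤ q)]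
    {X Y U : Type*} [NormedAddCommGroup X] [NormedSpace ℝ X]
    [NormedAddCommGroup Y] [NormedSpace ℝ Y] [NormedAddCommGroup U] [NormedSpace ℝ U]
    (r : ℝ≥0∞) (ι : Y →L[ℝ] Lp ℝ q μ) (j : U →L[ℝ] X) (S : X → Y) : Prop :=
  ∀ x : X, ∃ C ε : ℝ, 0 < C ∧ 0 < ε ∧
    (∀ x₁ x₂ : X, ‖x₁ - x‖ ≤ ε → ‖x₂ - x‖ ≤ ε → ‖S x₁ - S x₂‖ ≤ C * ‖x₁ - x₂‖) ∧
    (∀ (x₁ : X) (z : U), ‖x₁ - x‖ ≤ ε → ‖z‖ ≤ ε →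
      eLpNorm ((ι (S (x₁ + j z)) : Ω → ℝ) - (ι (S x₁) : Ω → ℝ)) r μ ≤
        ENNReal.ofReal (C * ‖z‖))

/-- Pointwise Y-norm bound for Gâteaux derivatives from local Lipschitz continuity. -/
lemma gateaux_Y_bound {X Y : Type*} [NormedAddCommGroup X] [NormedSpace ℝ X]
    [NormedAddCommGroup Y] [NormedSpace ℝ Y] {S : X → Y} {C ε : ℝ} (hε : 0 < ε) {x x₁ : X}
    (hlip1 : ∀ y₁ y₂ : X, ‖y₁ - x‖ ≤ ε → ‖y₂ - x‖ ≤ ε → ‖S y₁ - S y₂‖ ≤ C * ‖y₁ - y₂‖)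
    (hx₁ : ‖x₁ - x‖ ≤ ε / 2) {G : X →L[ℝ] Y} (hG : GateauxDerivAt S G x₁) (w : X) :
    ‖G w‖ ≤ C * ‖w‖ := by
  have hne : (𝓝[>] (0:ℝ)).NeBot := nhdsGT_neBot 0
  refine le_of_tendsto ((continuous_norm.tendsto _).comp (hG w)) ?_
  have hδ : (0:ℝ) < ε / (2 * (‖w‖ + 1)) := by positivity
  filter_upwards [Ioo_mem_nhdsGT_of_mem (Set.mem_Ico.mpr ⟨le_refl 0, hδ⟩)] with t ht
  obtain ⟨ht0, htδ⟩ := ht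
  have hw1 : t * ‖w‖ ≤ ε / 2 := by
    have h1 : t * (‖w‖ + 1) ≤ ε / 2 := by
      have := mul_le_mul_of_nonneg_right htδ.le (by positivity : (0:ℝ) ≤ ‖w‖ + 1)
      calc t * (‖w‖ + 1) ≤ ε / (2 * (‖w‖ + 1)) * (‖w‖ + 1) := this
        _ = ε / 2 := by field_simp
    nlinarith [norm_nonneg w]
  have hmem : ‖x₁ + t • w - x‖ ≤ ε := by
    calc ‖x₁ + t • w - x‖ = ‖(x₁ - x) + t • w‖ := by rw [add_sub_right_comm]
      _ ≤ ‖x₁ - x‖ + ‖t • w‖ := norm_add_le _ _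
      _ ≤ ε / 2 + t * ‖w‖ := by
          rw [norm_smul, Real.norm_eq_abs, abs_of_pos ht0]; linarith
      _ ≤ ε := by linarith
  have hlip := hlip1 (x₁ + t • w) x₁ hmem (hx₁.trans (by linarith))
  have : ‖(1 / t) • (S (x₁ + t • w) - S x₁)‖ = (1 / t) * ‖S (x₁ + t • w) - S x₁‖ := by
    rw [norm_smul, Real.norm_eq_abs, abs_of_pos (by positivity)]
  simp only [Function.comp_apply, this]
  calc (1 / t) * ‖S (x₁ + t • w) - S x₁‖ ≤ (1 / t) * (C * ‖x₁ + t • w - x₁‖) := by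
        apply mul_le_mul_of_nonneg_left hlip (by positivity)
    _ = C * ‖w‖ := by
        rw [add_sub_cancel_left, norm_smul, Real.norm_eq_abs, abs_of_pos ht0]
        field_simp

/-- Fatou-type lemma: an `Lᵠ`-limit inherits uniform `L^r` bounds. -/
lemma aux_fatou {Ω : Type*} [MeasurableSpace Ω] {μ : Measure Ω} {q r : ℝ≥0∞} [Fact (1 ≤ q)]
    (F : ℕ → Lp ℝ q μ) (f : Lp ℝ q μ) (hF : Tendsto F atTop (𝓝 f)) {B : ℝ≥0∞}
    (hB : ∀ n, eLpNorm (F n : Ω → ℝ) r μ ≤ B) : eLpNorm (f : Ω → ℝ) r μ ≤ B := by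
  have hq : q ≠ 0 := (lt_of_lt_of_le zero_lt_one Fact.out).ne'
  have h1 : Tendsto (fun n => eLpNorm ((F n : Ω → ℝ) - (f : Ω → ℝ)) q μ) atTop (𝓝 0) :=
    (Lp.tendsto_Lp_iff_tendsto_eLpNorm' F f).mp hF
  have h2 : TendstoInMeasure μ (fun n => (F n : Ω → ℝ)) atTop (f : Ω → ℝ) :=
    tendstoInMeasure_of_tendsto_eLpNorm hq (fun n => Lp.aestronglyMeasurable _)
      (Lp.aestronglyMeasurable f) h1
  obtain ⟨ns, -, hae⟩ := h2.exists_seq_tendsto_ae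
  calc eLpNorm (f : Ω → ℝ) r μ
      ≤ atTop.liminf fun i => eLpNorm ((F (ns i) : Ω → ℝ)) r μ :=
        MeasureTheory.Lp.eLpNorm_lim_le_liminf_eLpNorm (fun i => Lp.aestronglyMeasurable _) _ hae
    _ ≤ B := by
        refine liminf_le_of_le (by isBoundedDefault) ?_
        intro b hb
        obtain ⟨i, hi⟩ := hb.exists
        exact hi.trans (hB _)

/-- `L^r` bound for Gâteaux derivatives, via the `U`-Lipschitz estimate and Fatou. -/
lemma gateaux_Lr_bound {Ω : Type*} [MeasurableSpace Ω] {μ : Measure Ω} {q : ℝ≥0∞}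
    [Fact (1 ≤ q)] {X Y U : Type*} [NormedAddCommGroup X] [NormedSpace ℝ X]
    [NormedAddCommGroup Y] [NormedSpace ℝ Y] [NormedAddCommGroup U] [NormedSpace ℝ U]
    {r : ℝ≥0∞} {ι : Y →L[ℝ] Lp ℝ q μ} {j : U →L[ℝ] X} {S : X → Y}
    {C ε : ℝ} (hC : 0 < C) (hε : 0 < ε) {x x₁ : X}
    (hlip2 : ∀ (y : X) (z : U), ‖y - x‖ ≤ ε → ‖z‖ ≤ ε →
      eLpNorm ((ι (S (y + j z)) : Ω → ℝ) - (ι (S y) : Ω → ℝ)) r μ ≤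
        ENNReal.ofReal (C * ‖z‖))
    (hx₁ : ‖x₁ - x‖ ≤ ε) {G : X →L[ℝ] Y} (hG : GateauxDerivAt S G x₁)
    (z : U) (hz : ‖z‖ ≤ ε) :
    eLpNorm (ι (G (j z)) : Ω → ℝ) r μ ≤ ENNReal.ofReal (C * ‖z‖) := by
  set u : ℕ → ℝ := fun k => 1 / (k + 1) with hu
  have hu_pos : ∀ k, 0 < u k := fun k => by positivity
  have hu_le : ∀ k, u k ≤ 1 := fun k => by
    rw [hu]; rw [div_le_one (by positivity)]; simp
  have hu_t : Tendsto u atTop (𝓝[>] (0:ℝ)) := by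
    apply tendsto_nhdsWithin_of_tendsto_nhds_of_eventually_within
    · exact tendsto_one_div_add_atTop_nhds_zero_nat
    · exact Eventually.of_forall fun k => hu_pos k
  have hYt : Tendsto (fun k => (1 / u k) • (S (x₁ + u k • j z) - S x₁)) atTop
      (𝓝 (G (j z))) := (hG (j z)).comp hu_t
  have hLt : Tendsto (fun k => ι ((1 / u k) • (S (x₁ + u k • j z) - S x₁))) atTop
      (𝓝 (ι (G (j z)))) := (ι.continuous.tendsto _).comp hYt
  refine aux_fatou _ _ hLt fun k => ?_
  have hrw : ι ((1 / u k) • (S (x₁ + u k • j z) - S x₁)) =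
      (1 / u k) • (ι (S (x₁ + j (u k • z))) - ι (S x₁)) := by
    rw [j.map_smul, ι.map_smul, ι.map_sub]
  rw [hrw]
  have hcong : eLpNorm ((((1 / u k) • (ι (S (x₁ + j (u k • z))) - ι (S x₁))) : Lp ℝ q μ)
        : Ω → ℝ) r μ =
      eLpNorm ((1 / u k) • ((ι (S (x₁ + j (u k • z))) : Ω → ℝ) - (ι (S x₁) : Ω → ℝ))) r μ := by
    apply eLpNorm_congr_ae
    filter_upwards [Lp.coeFn_smul (1 / u k) (ι (S (x₁ + j (u k • z))) - ι (S x₁)),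
      Lp.coeFn_sub (ι (S (x₁ + j (u k • z)))) (ι (S x₁))] with ω h1 h2
    simp only [h1, Pi.smul_apply, h2, Pi.sub_apply, smul_eq_mul]
  rw [hcong]
  have hzk : ‖u k • z‖ ≤ ε := by
    rw [norm_smul, Real.norm_eq_abs, abs_of_pos (hu_pos k)]
    calc u k * ‖z‖ ≤ 1 * ‖z‖ :=
        mul_le_mul_of_nonneg_right (hu_le k) (norm_nonneg z)
      _ ≤ ε := by rwa [one_mul]
  calc eLpNorm ((1 / u k) • ((ι (S (x₁ + j (u k • z))) : Ω → ℝ) - (ι (S x₁) : Ω → ℝ))) r μ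
      ≤ ‖(1 / u k)‖₊ • eLpNorm ((ι (S (x₁ + j (u k • z))) : Ω → ℝ) - (ι (S x₁) : Ω → ℝ)) r μ :=
        eLpNorm_const_smul_le
    _ ≤ ‖(1 / u k)‖₊ • ENNReal.ofReal (C * ‖u k • z‖) := by
        exact mul_le_mul_right (hlip2 x₁ (u k • z) hx₁ hzk) _
    _ = ENNReal.ofReal (C * ‖z‖) := by
        rw [ENNReal.smul_def, smul_eq_mul, ← ENNReal.ofReal_coe_nnreal]
        rw [coe_nnnorm, Real.norm_eq_abs, abs_of_pos (by positivity : (0:ℝ) < 1 / u k)]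
        rw [← ENNReal.ofReal_mul (by positivity)]
        congr 1
        rw [norm_smul, Real.norm_eq_abs, abs_of_pos (hu_pos k)]
        have : u k ≠ 0 := (hu_pos k).ne'
        field_simp

set_option synthInstance.maxHeartbeats 1000000

/-- Local uniform bound on the strong-weak Bouligand differential in
`L(U, L^r(μ))`-sense. -/
theorem bouligandSW_locally_bounded
    {Ω : Type*} [MeasurableSpace Ω] (μ : Measure Ω) (hμc : μ.IsComplete)
    (q r : ℝ≥0∞) [Fact (1 ≤ q)] (hr : 1 ≤ r)
    {X Y U : Type*} [NormedAddCommGroup X] [NormedSpace ℝ X] [CompleteSpace X]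
    [TopologicalSpace.SeparableSpace X]
    [NormedAddCommGroup Y] [NormedSpace ℝ Y] [CompleteSpace Y]
    [TopologicalSpace.SeparableSpace Y] (hYrefl : IsReflexiveSpace Y)
    [NormedAddCommGroup U] [NormedSpace ℝ U] [CompleteSpace U] (hUrefl : IsReflexiveSpace U)
    (ι : Y →L[ℝ] Lp ℝ q μ) (hι_inj : Function.Injective ι) (hι_cpt : IsCompactOperator ι)
    (j : U →L[ℝ] X) (hj_inj : Function.Injective j) (hj_cpt : IsCompactOperator j)
    (S : X → Y) (hconv : PtwiseAEConvex ι S) (hlip : LocLipWith r ι j S)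
    (x : X) :
    ∃ C δ : ℝ, 0 < C ∧ 0 < δ ∧
      ∀ (v : X) (G : X →L[ℝ] Y), ‖v - x‖ ≤ δ → G ∈ BouligandSW S v →
        ∀ z : U, eLpNorm (ι (G (j z)) : Ω → ℝ) r μ ≤ ENNReal.ofReal (C * ‖z‖) := by
  obtain ⟨C, ε, hC, hε, hlip1, hlip2⟩ := hlip x
  refine ⟨C, ε / 4, hC, by positivity, ?_⟩
  rintro v G hv ⟨xn0, Gn0, hGD0, hxn0, hWOT0⟩ z
  obtain ⟨N, hN⟩ := Metric.tendsto_atTop.mp hxn0 (ε / 4) (by positivity)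
  set xn : ℕ → X := fun n => xn0 (n + N) with hxn_def
  set Gn : ℕ → X →L[ℝ] Y := fun n => Gn0 (n + N) with hGn_def
  have hGD : ∀ n, GateauxDerivAt S (Gn n) (xn n) := fun n => hGD0 _
  have hWOT : ∀ (w : X) (f : Y →L[ℝ] ℝ),
      Tendsto (fun n => f (Gn n w)) atTop (𝓝 (f (G w))) :=
    fun w f => (hWOT0 w f).comp (tendsto_add_atTop_nat N)
  have hxx : ∀ n, ‖xn n - x‖ ≤ ε / 2 := by
    intro n
    have h1 : dist (xn0 (n + N)) v < ε / 4 := hN _ (Nat.le_add_left N n)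
    rw [dist_eq_norm] at h1
    calc ‖xn n - x‖ = ‖(xn0 (n + N) - v) + (v - x)‖ := by rw [hxn_def]; abel_nf
      _ ≤ ‖xn0 (n + N) - v‖ + ‖v - x‖ := norm_add_le _ _
      _ ≤ ε / 4 + ε / 4 := add_le_add h1.le hv
      _ = ε / 2 := by ring
  have key : ∀ w : U, ‖w‖ ≤ ε →
      eLpNorm (ι (G (j w)) : Ω → ℝ) r μ ≤ ENNReal.ofReal (C * ‖w‖) := by
    intro w hw
    have hYb : ∀ n, ‖Gn n (j w)‖ ≤ C * ‖j w‖ := fun n =>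
      gateaux_Y_bound hε hlip1 (hxx n) (hGD n) (j w)
    obtain ⟨K, hK, hKs⟩ :=
      IsCompactOperator.image_closedBall_subset_compact (f := ι.toLinearMap) hι_cpt (C * ‖j w‖)
    have hmem : ∀ n, ι (Gn n (j w)) ∈ K := fun n =>
      hKs ⟨Gn n (j w), Metric.mem_closedBall.mpr (by rw [dist_zero_right]; exact hYb n), rfl⟩
    obtain ⟨y, hyK, φ, hφ, hconv⟩ := hK.tendsto_subseq hmem
    have hyeq : y = ι (G (j w)) := by
      rw [NormedSpace.eq_iff_forall_dual_eq ℝ]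
      intro g
      have h1 : Tendsto (fun n => g (ι (Gn n (j w)))) atTop (𝓝 (g (ι (G (j w))))) :=
        hWOT (j w) (g.comp ι)
      have h2 : Tendsto (fun i => g (ι (Gn (φ i) (j w)))) atTop (𝓝 (g y)) :=
        (g.continuous.tendsto y).comp hconv
      exact tendsto_nhds_unique h2 (h1.comp hφ.tendsto_atTop)
    rw [← hyeq]
    exact aux_fatou (fun i => ι (Gn (φ i) (j w))) y hconv fun i =>
      gateaux_Lr_bound hC hε hlip2 ((hxx (φ i)).trans (by linarith)) (hGD (φ i)) w hw
  by_cases hz0 : z = 0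
  · subst hz0
    have h0 : ι (G (j 0)) = 0 := by rw [map_zero, map_zero, map_zero]
    rw [h0, eLpNorm_congr_ae (Lp.coeFn_zero ℝ q μ), eLpNorm_zero]
    exact zero_le
  · have hzpos : 0 < ‖z‖ := norm_pos_iff.mpr hz0
    set c : ℝ := ε / ‖z‖ with hc_def
    have hc : 0 < c := by positivity
    have hcz : ‖c • z‖ ≤ ε := by
      rw [norm_smul, Real.norm_eq_abs, abs_of_pos hc, hc_def]
      rw [div_mul_cancel₀ _ hzpos.ne']
    have hk := key (c • z) hcz
    have hrw : ι (G (j z)) = (1 / c) • ι (G (j (c • z))) := by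
      rw [j.map_smul, G.map_smul, ι.map_smul, smul_smul, one_div_mul_cancel hc.ne', one_smul]
    have hcong : eLpNorm (ι (G (j z)) : Ω → ℝ) r μ =
        eLpNorm ((1 / c) • (ι (G (j (c • z))) : Ω → ℝ)) r μ := by
      rw [hrw]
      apply eLpNorm_congr_ae
      filter_upwards [Lp.coeFn_smul (1 / c) (ι (G (j (c • z))))] with ω h1
      simp only [h1]
    rw [hcong]
    calc eLpNorm ((1 / c) • (ι (G (j (c • z))) : Ω → ℝ)) r μ
        ≤ ‖(1 / c)‖₊ • eLpNorm (ι (G (j (c • z))) : Ω → ℝ) r μ := eLpNorm_const_smul_le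
      _ ≤ ‖(1 / c)‖₊ • ENNReal.ofReal (C * ‖c • z‖) := mul_le_mul_right hk _
      _ = ENNReal.ofReal (C * ‖z‖) := by
          rw [ENNReal.smul_def, smul_eq_mul, ← ENNReal.ofReal_coe_nnreal, coe_nnnorm,
            Real.norm_eq_abs, abs_of_pos (by positivity : (0:ℝ) < 1 / c),
            ← ENNReal.ofReal_mul (by positivity), norm_smul, Real.norm_eq_abs, abs_of_pos hc]
          congr 1
          field_simp
end
end

section
/- Let (Ω,Σ,μ) be a finite measure space and let q ∈ (1,∞) and s ∈ (1,∞] be exponents with 1/s + 1/q < 1 and 1/s + 2/q − 1 ≠ 0. Let u ∈ L^s(Ω), v ∈ L^q(Ω), and α, k₀ ≥ 0 be such that the shrinkages v_k := v − min(k, max(−k, v)) satisfy ‖v_k‖²_{L^q(Ω)} ≤ α ∫_Ω |u v_k| dμ < ∞ for all k ≥ k₀. If σ := (1/s + 2/q − 1)^{−1} < 0, then there exists a constant C > 0 depending only on s, q and μ(Ω) such that v ∈ L^∞(Ω) with ‖v‖_{L^∞(Ω)} ≤ k₀ + C α ‖u‖_{L^s(Ω)}. -/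
open Filter Topology MeasureTheory ENNReal NNReal

noncomputable section

lemma stamp_alg (p β M ψ0 : ℝ) (hp : 0 < p) (hβ : 1 < β) (hM : 0 < M) (hψ0 : 0 < ψ0) (n : ℕ) :
    M ^ p * (ψ0 * ((2:ℝ) ^ (-(p/(β-1)))) ^ n) ^ β /
      ((2 ^ (1 + 1/(β-1)) * M * ψ0 ^ ((β-1)/p)) * (1/2) ^ (n+1)) ^ p
    = ψ0 * ((2:ℝ) ^ (-(p/(β-1)))) ^ (n+1) := by
  have hβ1 : (0:ℝ) < β - 1 := by linarith
  have h2 : (0:ℝ) < 2 := two_pos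
  have hr : (0:ℝ) < (2:ℝ) ^ (-(p/(β-1))) := Real.rpow_pos_of_pos h2 _
  have hL : 0 < M ^ p * (ψ0 * ((2:ℝ) ^ (-(p/(β-1)))) ^ n) ^ β /
      ((2 ^ (1 + 1/(β-1)) * M * ψ0 ^ ((β-1)/p)) * (1/2) ^ (n+1)) ^ p := by positivity
  have hR : 0 < ψ0 * ((2:ℝ) ^ (-(p/(β-1)))) ^ (n+1) := by positivity
  rw [← Real.exp_log hL, ← Real.exp_log hR]
  congr 1
  have h12 : Real.log (1/2 : ℝ) = -Real.log 2 := by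
    rw [one_div, Real.log_inv]
  rw [Real.log_div (by positivity) (by positivity),
      Real.log_mul (by positivity) (by positivity),
      Real.log_rpow hM,
      Real.log_rpow (by positivity),
      Real.log_mul (by positivity) (by positivity),
      Real.log_pow,
      Real.log_rpow h2,
      Real.log_rpow (by positivity),
      Real.log_mul (by positivity) (by positivity),
      Real.log_mul (by positivity) (by positivity),
      Real.log_mul (by positivity) (by positivity),
      Real.log_rpow h2,
      Real.log_rpow hψ0,
      Real.log_pow,
      h12,
      Real.log_mul (by positivity) (by positivity),
      Real.log_pow,
      Real.log_rpow h2]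
  have hpne : p ≠ 0 := hp.ne'
  have hβne : β - 1 ≠ 0 := hβ1.ne'
  push_cast
  field_simp
  ring

lemma stamp_real (k₀ p β M : ℝ) (hp : 0 < p) (hβ : 1 < β) (hM : 0 ≤ M)
    (ψ : ℝ → ℝ) (hψ : ∀ k, 0 ≤ ψ k)
    (hanti : ∀ ⦃k h : ℝ⦄, k₀ ≤ k → k ≤ h → ψ h ≤ ψ k)
    (hrec : ∀ ⦃k h : ℝ⦄, k₀ ≤ k → k < h → ψ h ≤ M ^ p * ψ k ^ β / (h - k) ^ p)
    {D : ℝ} (hD : 2 ^ (1 + 1 / (β - 1)) * M * ψ k₀ ^ ((β - 1) / p) ≤ D) (hD0 : 0 < D) :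
    ψ (k₀ + D) = 0 := by
  have hβ1 : (0:ℝ) < β - 1 := by linarith
  have hrec0 := hrec (le_refl k₀) (lt_add_of_pos_right k₀ hD0)
  by_cases hM0 : M = 0
  · rw [hM0, Real.zero_rpow hp.ne', zero_mul, zero_div] at hrec0
    exact le_antisymm hrec0 (hψ _)
  by_cases hψ0 : ψ k₀ = 0
  · rw [hψ0, Real.zero_rpow (by linarith : β ≠ 0), mul_zero, zero_div] at hrec0
    exact le_antisymm hrec0 (hψ _)
  have hMpos : 0 < M := lt_of_le_of_ne hM (Ne.symm hM0)
  have hψpos : 0 < ψ k₀ := lt_of_le_of_ne (hψ _) (Ne.symm hψ0)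
  set d : ℝ := 2 ^ (1 + 1 / (β - 1)) * M * ψ k₀ ^ ((β - 1) / p) with hd_def
  have hdpos : 0 < d := by positivity
  set r : ℝ := (2 : ℝ) ^ (-(p / (β - 1))) with hr_def
  have hrpos : 0 < r := Real.rpow_pos_of_pos two_pos _
  have hrlt : r < 1 := by
    have hγ : 0 < p / (β - 1) := by positivity
    exact Real.rpow_lt_one_of_one_lt_of_neg one_lt_two (by linarith)
  set kseq : ℕ → ℝ := fun n => k₀ + D - D * (1 / 2) ^ n with hkseq_def
  have hk0 : kseq 0 = k₀ := by simp [hkseq_def]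
  have hkmono : ∀ n, k₀ ≤ kseq n := by
    intro n
    have h1 : (1/2 : ℝ) ^ n ≤ 1 := pow_le_one₀ (by norm_num) (by norm_num)
    have h2 : D * (1/2:ℝ)^n ≤ D := by nlinarith
    simp only [hkseq_def]; linarith
  have hkle : ∀ n, kseq n ≤ k₀ + D := by
    intro n
    have : 0 ≤ D * (1/2:ℝ)^n := by positivity
    simp only [hkseq_def]; linarith
  have hkstep : ∀ n : ℕ, kseq (n+1) - kseq n = D * (1/2)^(n+1) := by
    intro n; simp only [hkseq_def]; ring
  have hkstep_pos : ∀ n : ℕ, (0:ℝ) < D * (1/2)^(n+1) := by intro n; positivity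
  have key : ∀ n, ψ (kseq n) ≤ ψ k₀ * r ^ n := by
    intro n
    induction n with
    | zero => simp [hk0]
    | succ n ih =>
      have hlt : kseq n < kseq (n+1) := by
        have h2 := hkstep_pos n
        rw [← hkstep n] at h2
        exact sub_pos.mp h2
      have h1 : ψ (kseq (n+1)) ≤ M ^ p * ψ (kseq n) ^ β / (kseq (n+1) - kseq n) ^ p :=
        hrec (hkmono n) hlt
      rw [hkstep n] at h1
      calc ψ (kseq (n+1)) ≤ M ^ p * ψ (kseq n) ^ β / (D * (1/2)^(n+1)) ^ p := h1
        _ ≤ M ^ p * (ψ k₀ * r ^ n) ^ β / (d * (1/2)^(n+1)) ^ p := by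
            gcongr
            all_goals first
              | exact hψ _
              | exact ih
              | exact hD
              | positivity
        _ = ψ k₀ * r ^ (n+1) := by
            rw [hr_def, hd_def]
            exact stamp_alg p β M (ψ k₀) hp hβ hMpos hψpos n
  have hlim : Filter.Tendsto (fun n : ℕ => ψ k₀ * r ^ n) atTop (nhds 0) := by
    have := tendsto_pow_atTop_nhds_zero_of_lt_one hrpos.le hrlt
    simpa using this.const_mul (ψ k₀)
  have hle : ∀ n, ψ (k₀ + D) ≤ ψ k₀ * r ^ n := fun n =>
    (hanti (hkmono n) (hkle n)).trans (key n)
  exact le_antisymm (ge_of_tendsto' hlim hle) (hψ _)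

lemma trunc_abs (k t : ℝ) (hk : 0 ≤ k) :
    |t - min k (max (-k) t)| = max (|t| - k) 0 := by
  rcases le_total t (-k) with h1 | h1
  · rw [max_eq_left h1, min_eq_right (by linarith : -k ≤ k),
      abs_of_nonpos (by linarith : t - -k ≤ 0), abs_of_nonpos (by linarith : t ≤ 0),
      max_eq_left (by linarith : (0:ℝ) ≤ -t - k)]
    ring
  · rcases le_total t k with h2 | h2
    · rw [max_eq_right h1, min_eq_right h2, sub_self, abs_zero,
        max_eq_right (sub_nonpos.mpr (abs_le.mpr ⟨by linarith, h2⟩))]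
    · rw [max_eq_right (by linarith : -k ≤ t), min_eq_left h2,
        abs_of_nonneg (by linarith : 0 ≤ t - k), abs_of_nonneg (by linarith : (0:ℝ) ≤ t),
        max_eq_left (by linarith : (0:ℝ) ≤ t - k)]

/-- Stampacchia-type truncation lemma, case `σ < 0`: if the shrinkages
`v_k := v - min(k, max(-k, v))` satisfy `‖v_k‖²_{L^q} ≤ α ∫ |u v_k| dμ < ∞` for all `k ≥ k₀`
and `σ := (1/s + 2/q - 1)⁻¹ < 0`, then `v ∈ L^∞` with
`‖v‖_{L^∞} ≤ k₀ + C α ‖u‖_{L^s}`, where `C > 0` depends only on `s`, `q` and `μ(Ω)`. -/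
theorem stampacchia_truncation_sigma_neg
    {Ω : Type*} [MeasurableSpace Ω] (μ : Measure Ω) [IsFiniteMeasure μ]
    (q s : ℝ≥0∞) (hq1 : 1 < q) (hq2 : q ≠ ∞) (hs : 1 < s)
    (hqs : (1 / s).toReal + (1 / q).toReal < 1)
    (hσ : ((1 / s).toReal + 2 * (1 / q).toReal - 1)⁻¹ < 0) :
    ∃ C : ℝ, 0 < C ∧
      ∀ (u v : Ω → ℝ) (α k₀ : ℝ), 0 ≤ α → 0 ≤ k₀ →
        MemLp u s μ → MemLp v q μ →
        (∀ k : ℝ, k₀ ≤ k →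
          eLpNorm (fun ω => v ω - min k (max (-k) (v ω))) q μ ^ 2 ≤
            ENNReal.ofReal α *
              ∫⁻ ω, ENNReal.ofReal |u ω * (v ω - min k (max (-k) (v ω)))| ∂μ ∧
          ∫⁻ ω, ENNReal.ofReal |u ω * (v ω - min k (max (-k) (v ω)))| ∂μ < ⊤) →
        MemLp v ∞ μ ∧
          eLpNorm v ∞ μ ≤ ENNReal.ofReal k₀ + ENNReal.ofReal (C * α) * eLpNorm u s μ := by
  have hq0 : q ≠ 0 := (zero_lt_one.trans hq1).ne'
  set a : ℝ := (1/s).toReal with ha_def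
  set b : ℝ := (1/q).toReal with hb_def
  set qr : ℝ := q.toReal with hqr_def
  have hqr1 : 1 < qr := by
    rw [hqr_def, ← ENNReal.toReal_one]
    exact (ENNReal.toReal_lt_toReal one_ne_top hq2).mpr hq1
  have hqrpos : (0:ℝ) < qr := by linarith
  have hb : b = 1/qr := by
    rw [hb_def, hqr_def, one_div, one_div, ENNReal.toReal_inv]
  have hbpos : 0 < b := by rw [hb]; positivity
  have ha0 : 0 ≤ a := ENNReal.toReal_nonneg
  have hσ' : a + 2*b < 1 := by
    have := inv_lt_zero.mp hσ
    linarith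
  have hqb : qr * b = 1 := by rw [hb]; field_simp
  set ρ : ℝ := 1 - a - b with hρ_def
  have hρpos : 0 < ρ := by rw [hρ_def]; linarith
  set β : ℝ := qr * ρ with hβ_def
  have hβ : 1 < β := by
    rw [hβ_def, hρ_def]
    nlinarith
  -- ENNReal exponents
  have h1s_lt : 1/s < 1 := by rw [one_div]; exact ENNReal.inv_lt_one.mpr hs
  have h1q_lt : 1/q < 1 := by rw [one_div]; exact ENNReal.inv_lt_one.mpr hq1
  have h1sne : 1/s ≠ ⊤ := h1s_lt.trans_le le_top |>.ne
  have h1qne : 1/q ≠ ⊤ := h1q_lt.trans_le le_top |>.ne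
  set s' : ℝ≥0∞ := (1 - 1/s)⁻¹ with hs'_def
  have hs'inv : 1/s' = 1 - 1/s := by rw [hs'_def, one_div, inv_inv]
  have hconj1 : (1:ℝ≥0∞)/1 = 1/s + 1/s' := by
    rw [hs'inv, one_div_one]
    exact (add_tsub_cancel_of_le h1s_lt.le).symm
  have hsum_lt : 1/s + 1/q < 1 := by
    rw [← ENNReal.toReal_lt_toReal (ENNReal.add_ne_top.mpr ⟨h1sne, h1qne⟩) one_ne_top,
      ENNReal.toReal_add h1sne h1qne, ENNReal.toReal_one]
    exact hqs
  have h1q_le : 1/q ≤ 1 - 1/s := ENNReal.le_sub_of_add_le_left h1sne hsum_lt.le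
  set r' : ℝ≥0∞ := (1 - 1/s - 1/q)⁻¹ with hr'_def
  have hr'inv : 1/r' = 1 - 1/s - 1/q := by rw [hr'_def, one_div, inv_inv]
  have hconj2 : 1/s' = 1/q + 1/r' := by
    rw [hs'inv, hr'inv]
    exact (add_tsub_cancel_of_le h1q_le).symm
  have hsub_toReal : (1 - 1/s - 1/q).toReal = ρ := by
    rw [ENNReal.toReal_sub_of_le h1q_le (by
        exact ((tsub_le_self).trans_lt one_lt_top).ne),
      ENNReal.toReal_sub_of_le h1s_lt.le one_ne_top, ENNReal.toReal_one, hρ_def]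
  have hsub_netop : (1 - 1/s - 1/q) ≠ ⊤ := ((tsub_le_self.trans tsub_le_self).trans_lt one_lt_top).ne
  have hsub_ne0 : (1 - 1/s - 1/q) ≠ 0 := by
    intro h
    rw [h, ENNReal.toReal_zero] at hsub_toReal
    linarith
  have hr'ne0 : r' ≠ 0 := by rw [hr'_def]; exact ENNReal.inv_ne_zero.mpr hsub_netop
  have hr'netop : r' ≠ ⊤ := by rw [hr'_def]; exact ENNReal.inv_ne_top.mpr hsub_ne0
  have hr'exp : 1 / r'.toReal = ρ := by
    rw [hr'_def, ENNReal.toReal_inv, one_div, inv_inv, hsub_toReal]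
  -- the constant
  set m : ℝ := (μ Set.univ).toReal with hm_def
  have hm0 : 0 ≤ m := ENNReal.toReal_nonneg
  set C : ℝ := 2 ^ (1 + 1/(β-1)) * (1 + m) ^ ((β-1)/qr) with hC_def
  have hCpos : 0 < C := by
    rw [hC_def]; positivity
  refine ⟨C, hCpos, ?_⟩
  intro u v α k₀ hα hk₀ hu hv hyp
  -- measurable representative
  obtain ⟨w, hw_meas, hw_eq⟩ : ∃ w, StronglyMeasurable w ∧ v =ᵐ[μ] w :=
    ⟨hv.1.mk v, hv.1.stronglyMeasurable_mk, hv.1.ae_eq_mk⟩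
  have hw_mem : MemLp w q μ := hv.ae_eq hw_eq
  have hwm : Measurable w := hw_meas.measurable
  set U : ℝ≥0∞ := eLpNorm u s μ with hU_def
  have hU : U ≠ ⊤ := hu.2.ne
  set Mr : ℝ := α * U.toReal with hMr_def
  have hMr : 0 ≤ Mr := mul_nonneg hα ENNReal.toReal_nonneg
  have hMU : ENNReal.ofReal α * U = ENNReal.ofReal Mr := by
    rw [hMr_def, ENNReal.ofReal_mul hα, ENNReal.ofReal_toReal hU]
  set φ : ℝ → ℝ≥0∞ := fun k => μ {ω | k < |w ω|} with hφ_def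
  have hφ_meas : ∀ k : ℝ, MeasurableSet {ω | k < |w ω|} := fun k =>
    measurableSet_lt measurable_const hwm.abs
  have hφ_anti : ∀ ⦃k h : ℝ⦄, k ≤ h → φ h ≤ φ k := fun k h hkh =>
    measure_mono (fun ω hω => lt_of_le_of_lt hkh hω)
  have hφ_fin : ∀ k, φ k ≠ ⊤ := fun k => (measure_lt_top μ _).ne
  set ψ : ℝ → ℝ := fun k => (φ k).toReal with hψ_def
  -- transfer hypothesis
  have hyp' : ∀ k : ℝ, k₀ ≤ k →
      eLpNorm (fun ω => w ω - min k (max (-k) (w ω))) q μ ^ 2 ≤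
        ENNReal.ofReal α *
          ∫⁻ ω, ENNReal.ofReal |u ω * (w ω - min k (max (-k) (w ω)))| ∂μ := by
    intro k hk
    have he : (fun ω => v ω - min k (max (-k) (v ω))) =ᵐ[μ]
        (fun ω => w ω - min k (max (-k) (w ω))) := hw_eq.mono fun ω h => by dsimp only; rw [h]
    have he2 : (fun ω => ENNReal.ofReal |u ω * (v ω - min k (max (-k) (v ω)))|) =ᵐ[μ]
        (fun ω => ENNReal.ofReal |u ω * (w ω - min k (max (-k) (w ω)))|) :=
      he.mono fun ω h => by dsimp only at h ⊢; rw [h]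
    have := (hyp k hk).1
    rwa [eLpNorm_congr_ae he, lintegral_congr_ae he2] at this
  -- the recursion for ψ
  have hrecψ : ∀ ⦃k h : ℝ⦄, k₀ ≤ k → k < h →
      ψ h ≤ Mr ^ qr * ψ k ^ β / (h - k) ^ qr := by
    intro k h hk hkh
    have hk0' : 0 ≤ k := le_trans hk₀ hk
    set vk : Ω → ℝ := fun ω => w ω - min k (max (-k) (w ω)) with hvk_def
    have hvkm : Measurable vk :=
      hwm.sub (measurable_const.min (measurable_const.max hwm))
    have habs : ∀ ω, |vk ω| = max (|w ω| - k) 0 := fun ω => trunc_abs k (w ω) hk0'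
    set N : ℝ≥0∞ := eLpNorm vk q μ with hN_def
    have hN_fin : N ≠ ⊤ := by
      refine (lt_of_le_of_lt (eLpNorm_mono fun ω => ?_) hw_mem.2).ne
      rw [Real.norm_eq_abs, Real.norm_eq_abs, habs ω]
      exact max_le (by linarith [abs_nonneg (w ω)]) (abs_nonneg _)
    -- Chebyshev
    have cheb : ENNReal.ofReal (h - k) ^ qr * φ h ≤ N ^ qr := by
      have hNq : N ^ qr = ∫⁻ ω, (‖vk ω‖₊ : ℝ≥0∞) ^ qr ∂μ := by
        rw [hN_def, eLpNorm_eq_lintegral_rpow_enorm_toReal hq0 hq2, ← ENNReal.rpow_mul,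
          one_div, ← hqr_def, inv_mul_cancel₀ hqrpos.ne', ENNReal.rpow_one]
        rfl
      rw [hNq]
      have hsub : {ω | h < |w ω|} ⊆
          {ω | ENNReal.ofReal (h - k) ^ qr ≤ (‖vk ω‖₊ : ℝ≥0∞) ^ qr} := by
        intro ω hω
        simp only [Set.mem_setOf_eq] at hω ⊢
        refine ENNReal.rpow_le_rpow ?_ hqrpos.le
        change ENNReal.ofReal (h - k) ≤ ‖vk ω‖ₑ
        rw [Real.enorm_eq_ofReal_abs, habs ω]
        exact ENNReal.ofReal_le_ofReal (le_max_of_le_left (by linarith))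
      calc ENNReal.ofReal (h - k) ^ qr * φ h
          ≤ ENNReal.ofReal (h - k) ^ qr *
            μ {ω | ENNReal.ofReal (h - k) ^ qr ≤ (‖vk ω‖₊ : ℝ≥0∞) ^ qr} :=
            mul_le_mul_right (measure_mono hsub) _
        _ ≤ ∫⁻ ω, (‖vk ω‖₊ : ℝ≥0∞) ^ qr ∂μ :=
            mul_meas_ge_le_lintegral₀ (hvkm.enorm.pow_const qr).aemeasurable _
    -- Hölder 1
    have holder1 : ∫⁻ ω, ENNReal.ofReal |u ω * vk ω| ∂μ ≤ U * eLpNorm vk s' μ := by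
      have h1 : ∫⁻ ω, ENNReal.ofReal |u ω * vk ω| ∂μ = eLpNorm (u • vk) 1 μ := by
        rw [eLpNorm_one_eq_lintegral_enorm]
        refine lintegral_congr fun ω => ?_
        rw [Pi.smul_apply', smul_eq_mul, Real.enorm_eq_ofReal_abs]
      rw [h1, hU_def]
      exact eLpNorm_smul_le_mul_eLpNorm hvkm.aestronglyMeasurable hu.1
          (hpqr := ⟨by simpa only [one_div] using hconj1.symm⟩)
    -- Hölder 2
    have holder2 : eLpNorm vk s' μ ≤ N * φ k ^ ρ := by
      set g : Ω → ℝ := Set.indicator {ω | k < |w ω|} (fun _ => (1:ℝ)) with hg_def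
      have hgm : AEStronglyMeasurable g μ :=
        (stronglyMeasurable_const.indicator (hφ_meas k)).aestronglyMeasurable
      have hvkg : vk = vk • g := by
        funext ω
        by_cases hc : k < |w ω|
        · simp [hg_def, Set.indicator_of_mem, hc]
        · have : |vk ω| = 0 := by
            rw [habs ω]
            exact max_eq_right (by push_neg at hc; linarith)
          have hvk0 : vk ω = 0 := abs_eq_zero.mp this
          simp [hg_def, Set.indicator_of_notMem, hc, hvk0]
      calc eLpNorm vk s' μ = eLpNorm (vk • g) s' μ := by rw [← hvkg]
        _ ≤ eLpNorm vk q μ * eLpNorm g r' μ :=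
            eLpNorm_smul_le_mul_eLpNorm hgm hvkm.aestronglyMeasurable
              (hpqr := ⟨by simpa only [one_div] using hconj2.symm⟩)
        _ = N * φ k ^ ρ := by
            rw [hg_def, eLpNorm_indicator_const (hφ_meas k) hr'ne0 hr'netop,
              enorm_one, one_mul, hr'exp, hN_def]
    -- combine
    have main : N ^ 2 ≤ (ENNReal.ofReal Mr * φ k ^ ρ) * N := by
      calc N ^ 2 ≤ ENNReal.ofReal α * ∫⁻ ω, ENNReal.ofReal |u ω * vk ω| ∂μ := hyp' k hk
        _ ≤ ENNReal.ofReal α * (U * (N * φ k ^ ρ)) := by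
            refine mul_le_mul_right (holder1.trans (mul_le_mul_right holder2 _)) _
        _ = (ENNReal.ofReal Mr * φ k ^ ρ) * N := by rw [← hMU]; ring
    have hφh : φ h ≤ ENNReal.ofReal Mr ^ qr * φ k ^ β / ENNReal.ofReal (h - k) ^ qr := by
      by_cases hN0 : N = 0
      · have : ENNReal.ofReal (h - k) ^ qr * φ h = 0 := by
          refine le_antisymm ?_ zero_le
          calc ENNReal.ofReal (h - k) ^ qr * φ h ≤ N ^ qr := cheb
            _ = 0 := by rw [hN0, ENNReal.zero_rpow_of_pos hqrpos]
        have hne : ENNReal.ofReal (h - k) ^ qr ≠ 0 := by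
          refine (ENNReal.rpow_pos (ENNReal.ofReal_pos.mpr (by linarith)) ?_).ne'
          exact ENNReal.ofReal_ne_top
        have := (mul_eq_zero.mp this).resolve_left hne
        rw [this]
        exact zero_le
      · have hNle : N ≤ ENNReal.ofReal Mr * φ k ^ ρ := by
          rw [sq] at main
          exact (ENNReal.mul_le_mul_iff_left hN0 hN_fin).mp main
        have h2 : ENNReal.ofReal (h - k) ^ qr * φ h ≤
            (ENNReal.ofReal Mr * φ k ^ ρ) ^ qr :=
          cheb.trans (ENNReal.rpow_le_rpow hNle hqrpos.le)
        rw [ENNReal.mul_rpow_of_nonneg _ _ hqrpos.le, ← ENNReal.rpow_mul,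
          mul_comm ρ qr, ← hβ_def] at h2
        rw [ENNReal.le_div_iff_mul_le (Or.inl ?_) (Or.inl ?_), mul_comm]
        · exact h2
        · exact (ENNReal.rpow_pos (ENNReal.ofReal_pos.mpr (by linarith)) ENNReal.ofReal_ne_top).ne'
        · exact ENNReal.rpow_ne_top_of_nonneg hqrpos.le ENNReal.ofReal_ne_top
    -- to reals
    have hRHS_ne : ENNReal.ofReal Mr ^ qr * φ k ^ β / ENNReal.ofReal (h - k) ^ qr ≠ ⊤ := by
      refine (ENNReal.div_lt_top ?_ ?_).ne
      · exact ENNReal.mul_ne_top (ENNReal.rpow_ne_top_of_nonneg hqrpos.le ENNReal.ofReal_ne_top)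
          (ENNReal.rpow_ne_top_of_nonneg (by linarith : (0:ℝ) ≤ β) (hφ_fin k))
      · exact (ENNReal.rpow_pos (ENNReal.ofReal_pos.mpr (by linarith)) ENNReal.ofReal_ne_top).ne'
    have := ENNReal.toReal_mono hRHS_ne hφh
    rw [ENNReal.toReal_div, ENNReal.toReal_mul, ← ENNReal.toReal_rpow, ← ENNReal.toReal_rpow,
      ← ENNReal.toReal_rpow, ENNReal.toReal_ofReal hMr, ENNReal.toReal_ofReal (by linarith)]
      at this
    exact this
  -- antitone
  have hψ_nonneg : ∀ k, 0 ≤ ψ k := fun k => ENNReal.toReal_nonneg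
  have hψanti : ∀ ⦃k h : ℝ⦄, k₀ ≤ k → k ≤ h → ψ h ≤ ψ k := fun k h _ hkh =>
    ENNReal.toReal_mono (hφ_fin k) (hφ_anti hkh)
  -- bound on d
  have hψk₀ : ψ k₀ ≤ 1 + m := by
    have h1 : φ k₀ ≤ μ Set.univ := measure_mono (Set.subset_univ _)
    have := ENNReal.toReal_mono (measure_ne_top μ _) h1
    rw [hm_def]; rw [hψ_def] at *
    linarith [this]
  have hled : 2 ^ (1 + 1/(β-1)) * Mr * ψ k₀ ^ ((β-1)/qr) ≤ C * Mr := by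
    have hx : ψ k₀ ^ ((β-1)/qr) ≤ (1 + m) ^ ((β-1)/qr) :=
      Real.rpow_le_rpow (hψ_nonneg k₀) hψk₀ (div_nonneg (by linarith) hqrpos.le)
    calc 2 ^ (1 + 1/(β-1)) * Mr * ψ k₀ ^ ((β-1)/qr)
        = (2 ^ (1 + 1/(β-1)) * ψ k₀ ^ ((β-1)/qr)) * Mr := by ring
      _ ≤ (2 ^ (1 + 1/(β-1)) * (1 + m) ^ ((β-1)/qr)) * Mr := by
          have h2p : (0:ℝ) ≤ 2 ^ (1 + 1/(β-1)) := by positivity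
          nlinarith [mul_le_mul_of_nonneg_left hx h2p]
      _ = C * Mr := by rw [hC_def]
  -- vanishing beyond k₀ + C * Mr
  have hzero : ∀ δ : ℝ, 0 < δ → ψ (k₀ + (C * Mr + δ)) = 0 := by
    intro δ hδ
    refine stamp_real k₀ qr β Mr hqrpos hβ hMr ψ hψ_nonneg hψanti hrecψ
      (hled.trans (le_add_of_nonneg_right hδ.le)) ?_
    have : 0 ≤ C * Mr := mul_nonneg hCpos.le hMr
    linarith
  have hnull : μ {ω | k₀ + C * Mr < |w ω|} = 0 := by
    have hsub : {ω | k₀ + C * Mr < |w ω|} ⊆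
        ⋃ n : ℕ, {ω | k₀ + (C * Mr + 1/(n+1)) < |w ω|} := by
      intro ω hω
      simp only [Set.mem_setOf_eq] at hω
      obtain ⟨n, hn⟩ := exists_nat_one_div_lt (sub_pos.mpr hω)
      exact Set.mem_iUnion.mpr ⟨n, by simp only [Set.mem_setOf_eq]; linarith⟩
    refine measure_mono_null hsub (measure_iUnion_null fun n => ?_)
    have hz := hzero (1/(n+1)) (by positivity)
    rw [hψ_def] at hz
    have := (ENNReal.toReal_eq_zero_iff _).mp hz
    exact this.resolve_right (hφ_fin _)
  have h_ae_w : ∀ᵐ ω ∂μ, |w ω| ≤ k₀ + C * Mr := by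
    rw [ae_iff]
    convert hnull using 2
    ext ω
    simp [not_le]
  have h_ae_v : ∀ᵐ ω ∂μ, |v ω| ≤ k₀ + C * Mr := by
    filter_upwards [h_ae_w, hw_eq] with ω h1 h2
    rw [h2]; exact h1
  constructor
  · exact memLp_top_of_bound hv.1 _ (h_ae_v.mono fun ω h => by rwa [Real.norm_eq_abs])
  · calc eLpNorm v ∞ μ = eLpNormEssSup v μ := eLpNorm_exponent_top
      _ ≤ ENNReal.ofReal (k₀ + C * Mr) :=
          eLpNormEssSup_le_of_ae_bound (h_ae_v.mono fun ω h => by rwa [Real.norm_eq_abs])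
      _ = ENNReal.ofReal k₀ + ENNReal.ofReal (C * α) * U := by
          rw [ENNReal.ofReal_add hk₀ (mul_nonneg hCpos.le hMr), hMr_def,
            show C * (α * U.toReal) = (C * α) * U.toReal by ring,
            ENNReal.ofReal_mul (mul_nonneg hCpos.le hα), ENNReal.ofReal_toReal hU]
      _ = ENNReal.ofReal k₀ + ENNReal.ofReal (C * α) * eLpNorm u s μ := by rw [hU_def]
end
end

section
/- Let (Ω,Σ,μ) be a measure space (not necessarily finite) and let q ∈ (1,∞) and s ∈ (1,∞] be exponents with 1/s + 2/q < 1. Let u ∈ L^s(Ω) and let v ∈ L^q(Ω) satisfy additionally v ∈ L^p(Ω) for some p ∈ [1,∞). Suppose α, k₀ ≥ 0 are such that the shrinkages v_k := v − min(k, max(−k, v)) satisfy ‖v_k‖²_{L^q(Ω)} ≤ α ∫_Ω |u v_k| dμ < ∞ for all k ≥ k₀. Then v ∈ L^∞(Ω) and there exists a constant C > 0 depending only on s and q such that ‖v‖_{L^∞(Ω)} ≤ max{k₀, ‖v‖_{L^p(Ω)}} + C α ‖u‖_{L^s(Ω)}. -/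
open Filter Topology MeasureTheory ENNReal NNReal

noncomputable section


lemma shr_abs_le {v k : ℝ} (hk : 0 ≤ k) : |v - min k (max (-k) v)| ≤ |v| := by
  rcases le_total v (-k) with h1 | h1
  · rw [max_eq_left h1, min_eq_right (by linarith)]
    rw [abs_of_nonpos (by linarith), abs_of_nonpos (by linarith)]; linarith
  · rcases le_total v k with h2 | h2
    · rw [max_eq_right h1, min_eq_right h2]; simp
    · rw [max_eq_right h1, min_eq_left h2]
      rw [abs_of_nonneg (by linarith), abs_of_nonneg (by linarith)]; linarith

lemma shr_eq_zero {v k : ℝ} (h : |v| ≤ k) : v - min k (max (-k) v) = 0 := by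
  rw [abs_le] at h
  rw [max_eq_right h.1, min_eq_right h.2]; ring

lemma shr_lower {v k h : ℝ} (hkh : k ≤ h) (hk : 0 ≤ k) (hv : h < |v|) :
    h - k ≤ |v - min k (max (-k) v)| := by
  rcases abs_cases v with ⟨hv1, hv2⟩ | ⟨hv1, hv2⟩
  · rw [hv1] at hv
    rw [max_eq_right (by linarith), min_eq_left (by linarith)]
    rw [abs_of_nonneg (by linarith)]; linarith
  · rw [hv1] at hv
    rw [max_eq_left (by linarith), min_eq_right (by linarith)]
    rw [abs_of_nonpos (by linarith)]; linarith

lemma stampacchia_iter (φ : ℝ → ℝ≥0∞) (hmono : ∀ ⦃a b : ℝ⦄, a ≤ b → φ b ≤ φ a)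
    {A : ℝ≥0∞} (hA0 : A ≠ 0) (hAtop : A ≠ ∞) {qr β : ℝ} (hqr : 0 < qr) (hβ : 1 < β)
    {k₁ : ℝ} (hφ1 : φ k₁ ≤ 1)
    (hstep : ∀ k h : ℝ, k₁ ≤ k → k < h →
      φ h ≤ (A / ENNReal.ofReal (h - k)) ^ qr * φ k ^ β) :
    φ (k₁ + A.toReal * 2 ^ (β / (β - 1))) = 0 := by
  have hβ1 : (0:ℝ) < β - 1 := by linarith
  set c : ℝ := 2 ^ (β / (β - 1)) with hc_def
  have hc : 0 < c := Real.rpow_pos_of_pos two_pos _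
  have hA : 0 < A.toReal := ENNReal.toReal_pos hA0 hAtop
  set d : ℝ := A.toReal * c with hd_def
  have hd : 0 < d := mul_pos hA hc
  set e : ℝ := qr / (β - 1) with he_def
  have he : 0 < e := div_pos hqr hβ1
  set kk : ℕ → ℝ := fun n => k₁ + d * (1 - (2:ℝ)⁻¹ ^ n) with hkk_def
  have hpow_le_one : ∀ n : ℕ, (2:ℝ)⁻¹ ^ n ≤ 1 :=
    fun n => pow_le_one₀ (by norm_num) (by norm_num)
  have hkk_ge : ∀ n, k₁ ≤ kk n := by
    intro n
    have : 0 ≤ d * (1 - (2:ℝ)⁻¹ ^ n) := by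
      apply mul_nonneg hd.le; linarith [hpow_le_one n]
    simp only [hkk_def]; linarith
  have hkk_le : ∀ n, kk n ≤ k₁ + d := by
    intro n
    have h2 : (0:ℝ) ≤ (2:ℝ)⁻¹ ^ n := by positivity
    have : d * (1 - (2:ℝ)⁻¹ ^ n) ≤ d := by nlinarith
    simp only [hkk_def]; linarith
  -- rewrite ofReal of the gap
  have claim : ∀ n : ℕ, φ (kk n) ≤ ((2:ℝ≥0∞) ^ (-e)) ^ n := by
    intro n
    induction n with
    | zero => simpa [hkk_def] using hφ1
    | succ n ih =>
      have hlt : kk n < kk (n + 1) := by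
        have h2 : (2:ℝ)⁻¹ ^ (n+1) < (2:ℝ)⁻¹ ^ n := by
          apply pow_lt_pow_right_of_lt_one₀ (by norm_num) (by norm_num) (by omega)
        simp only [hkk_def]
        have := hd
        nlinarith
      have key := hstep (kk n) (kk (n+1)) (hkk_ge n) hlt
      have hgap : kk (n+1) - kk n = A.toReal * (c * (2:ℝ)⁻¹ ^ (n+1)) := by
        simp only [hkk_def, hd_def]; ring
      -- express the ofReal term as a power of 2
      have hx : c * (2:ℝ)⁻¹ ^ (n+1) = (2:ℝ) ^ (β / (β-1) - ((n:ℝ)+1)) := by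
        rw [hc_def, ← Real.rpow_natCast (2:ℝ)⁻¹ (n+1), ← Real.rpow_neg_one (2:ℝ),
          ← Real.rpow_mul (by norm_num) (-1), ← Real.rpow_add two_pos]
        push_cast
        ring_nf
      have hofReal : ENNReal.ofReal (kk (n+1) - kk n)
          = A * (2:ℝ≥0∞) ^ (β / (β-1) - ((n:ℝ)+1)) := by
        rw [hgap, ENNReal.ofReal_mul ENNReal.toReal_nonneg, ENNReal.ofReal_toReal hAtop, hx,
          ← ENNReal.ofReal_rpow_of_pos two_pos, ENNReal.ofReal_ofNat]
      have hdiv : A / ENNReal.ofReal (kk (n+1) - kk n)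
          = (2:ℝ≥0∞) ^ (-(β / (β-1) - ((n:ℝ)+1))) := by
        rw [hofReal, ENNReal.rpow_neg, div_eq_mul_inv,
          ENNReal.mul_inv (Or.inl hA0) (Or.inl hAtop), ← mul_assoc,
          ENNReal.mul_inv_cancel hA0 hAtop, one_mul]
      rw [hdiv] at key
      have hihpow : φ (kk n) ^ β ≤ (2:ℝ≥0∞) ^ (-e * n * β) := by
        calc φ (kk n) ^ β ≤ (((2:ℝ≥0∞) ^ (-e)) ^ n) ^ β :=
              ENNReal.rpow_le_rpow ih (by linarith)
          _ = (2:ℝ≥0∞) ^ (-e * n * β) := by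
              rw [← ENNReal.rpow_natCast ((2:ℝ≥0∞) ^ (-e)) n, ← ENNReal.rpow_mul,
                ← ENNReal.rpow_mul]
              congr 1
              ring
      calc φ (kk (n+1))
          ≤ ((2:ℝ≥0∞) ^ (-(β / (β-1) - ((n:ℝ)+1)))) ^ qr * ((2:ℝ≥0∞) ^ (-e * n * β)) := by
            exact le_trans key (mul_le_mul_right hihpow _)
        _ = (2:ℝ≥0∞) ^ (-(β / (β-1) - ((n:ℝ)+1)) * qr + -e * n * β) := by
            rw [← ENNReal.rpow_mul, ← ENNReal.rpow_add _ _ (by norm_num) (by norm_num)]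
        _ = ((2:ℝ≥0∞) ^ (-e)) ^ (n+1) := by
            rw [← ENNReal.rpow_natCast ((2:ℝ≥0∞) ^ (-e)) (n+1), ← ENNReal.rpow_mul]
            congr 1
            push_cast
            rw [he_def]
            field_simp
            ring
  have hr : (2:ℝ≥0∞) ^ (-e) < 1 :=
    ENNReal.rpow_lt_one_of_one_lt_of_neg (by norm_num) (by linarith)
  have htend := ENNReal.tendsto_pow_atTop_nhds_zero_of_lt_one hr
  have hle : φ (k₁ + d) ≤ 0 :=
    le_of_tendsto_of_tendsto' tendsto_const_nhds htend
      (fun n => le_trans (hmono (hkk_le n)) (claim n))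
  simpa [hd_def] using le_zero_iff.mp hle

/-- Stampacchia-type truncation lemma for a not necessarily finite measure:
if `1/s + 2/q < 1`, `v ∈ L^q ∩ L^p` for some `p ∈ [1,∞)`, and the shrinkages
`v_k := v - min(k, max(-k, v))` satisfy `‖v_k‖²_{L^q} ≤ α ∫ |u v_k| dμ < ∞` for all `k ≥ k₀`,
then `v ∈ L^∞` with `‖v‖_{L^∞} ≤ max(k₀, ‖v‖_{L^p}) + C α ‖u‖_{L^s}`, where `C > 0` depends
only on `s` and `q`. -/
theorem stampacchia_truncation_infinite_measure
    (q s : ℝ≥0∞) (hq1 : 1 < q) (hq2 : q ≠ ∞) (hs : 1 < s)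
    (hqs : (1 / s).toReal + 2 * (1 / q).toReal < 1) :
    ∃ C : ℝ, 0 < C ∧
      ∀ (Ω : Type u) (_ : MeasurableSpace Ω) (μ : Measure Ω)
        (u v : Ω → ℝ) (p : ℝ≥0∞) (α k₀ : ℝ),
        1 ≤ p → p ≠ ∞ → 0 ≤ α → 0 ≤ k₀ →
        MemLp u s μ → MemLp v q μ → MemLp v p μ →
        (∀ k : ℝ, k₀ ≤ k →
          eLpNorm (fun ω => v ω - min k (max (-k) (v ω))) q μ ^ 2 ≤
            ENNReal.ofReal α *
              ∫⁻ ω, ENNReal.ofReal |u ω * (v ω - min k (max (-k) (v ω)))| ∂μ ∧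
          ∫⁻ ω, ENNReal.ofReal |u ω * (v ω - min k (max (-k) (v ω)))| ∂μ < ⊤) →
        MemLp v ∞ μ ∧
          eLpNorm v ∞ μ ≤
            max (ENNReal.ofReal k₀) (eLpNorm v p μ) +
              ENNReal.ofReal (C * α) * eLpNorm u s μ := by
  have hq0 : q ≠ 0 := (zero_lt_one.trans hq1).ne'
  have hs0 : s ≠ 0 := (zero_lt_one.trans hs).ne'
  set qr : ℝ := q.toReal with hqr_def
  have hqr1 : 1 < qr := by
    have := (ENNReal.toReal_lt_toReal ENNReal.one_ne_top hq2).mpr hq1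
    simpa using this
  have hqr0 : 0 < qr := zero_lt_one.trans hqr1
  set δs : ℝ≥0∞ := 1 / s with hδs_def
  set δq : ℝ≥0∞ := 1 / q with hδq_def
  have hδs_top : δs ≠ ∞ := by
    simp only [hδs_def, one_div]
    exact ENNReal.inv_ne_top.mpr hs0
  have hδq_top : δq ≠ ∞ := by
    simp only [hδq_def, one_div]
    exact ENNReal.inv_ne_top.mpr hq0
  set σ : ℝ := δs.toReal with hσ_def
  set τ : ℝ := δq.toReal with hτ_def
  have hτ : τ = qr⁻¹ := by
    rw [hτ_def, hδq_def, one_div, ENNReal.toReal_inv, hqr_def]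
  have hτpos : 0 < τ := by
    refine ENNReal.toReal_pos ?_ hδq_top
    simp only [hδq_def, one_div, ne_eq, ENNReal.inv_eq_zero]
    exact hq2
  have hσ0 : 0 ≤ σ := ENNReal.toReal_nonneg
  have hqs' : σ + 2 * τ < 1 := hqs
  have hsum_lt : δs + δq < 1 := by
    rw [← ENNReal.toReal_lt_toReal (by finiteness) ENNReal.one_ne_top]
    rw [ENNReal.toReal_add hδs_top hδq_top, ENNReal.toReal_one]
    have : (0:ℝ) ≤ τ := hτpos.le
    simp only [← hσ_def, ← hτ_def]
    linarith
  set δr : ℝ≥0∞ := 1 - (δs + δq) with hδr_def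
  have hδr0 : δr ≠ 0 := (tsub_pos_of_lt hsum_lt).ne'
  have hδr_top : δr ≠ ∞ := by
    refine (lt_of_le_of_lt tsub_le_self ?_).ne
    exact ENNReal.one_lt_top
  have hδr_sum : (δs + δq) + δr = 1 := add_tsub_cancel_of_le hsum_lt.le
  set ρ : ℝ := δr.toReal with hρ_def
  have hρ : ρ = 1 - σ - τ := by
    rw [hρ_def, hδr_def, ENNReal.toReal_sub_of_le hsum_lt.le ENNReal.one_ne_top,
      ENNReal.toReal_add hδs_top hδq_top, ENNReal.toReal_one, ← hσ_def, ← hτ_def]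
    ring
  have hρpos : 0 < ρ := ENNReal.toReal_pos hδr0 hδr_top
  set β : ℝ := ρ * qr with hβ_def
  have hτqr : τ * qr = 1 := by rw [hτ]; field_simp
  have hβ : 1 < β := by
    have h2 : (σ + 2 * τ) * qr < 1 * qr := mul_lt_mul_of_pos_right hqs' hqr0
    rw [hβ_def, hρ]
    nlinarith
  have hβpos : 0 < β := zero_lt_one.trans hβ
  refine ⟨2 ^ (β / (β - 1)), by positivity, ?_⟩
  intro Ω mΩ μ u v p α k₀ hp1 hptop hα hk₀ hu hv hvp hhyp
  set M : ℝ≥0∞ := eLpNorm u s μ with hM_def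
  have hM_top : M ≠ ∞ := hu.2.ne
  set P : ℝ≥0∞ := eLpNorm v p μ with hP_def
  have hP_top : P ≠ ∞ := hvp.2.ne
  have hp0 : p ≠ 0 := (zero_lt_one.trans_le hp1).ne'
  set k₁ : ℝ := max k₀ P.toReal with hk₁_def
  have hk₁0 : 0 ≤ k₁ := le_trans hk₀ (le_max_left _ _)
  set φ : ℝ → ℝ≥0∞ := fun t => μ {ω | t < |v ω|} with hφ_def
  have hmono : ∀ ⦃a b : ℝ⦄, a ≤ b → φ b ≤ φ a := fun a b hab =>
    measure_mono fun ω hω => lt_of_le_of_lt hab hω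
  have hofk₁ : ENNReal.ofReal k₁ ≤ max (ENNReal.ofReal k₀) P := by
    rw [hk₁_def]
    rcases le_total k₀ P.toReal with hcase | hcase
    · rw [max_eq_right hcase]
      refine le_trans ?_ (le_max_right _ _)
      rw [ENNReal.ofReal_toReal hP_top]
    · rw [max_eq_left hcase]
      exact le_max_left _ _
  -- initial bound φ k₁ ≤ 1
  have hφk₁ : φ k₁ ≤ 1 := by
    rcases eq_or_lt_of_le hk₁0 with h0 | h0
    · -- k₁ = 0, hence P = 0, hence v = 0 a.e.
      have hPz : P = 0 := by
        have h1 : P.toReal ≤ 0 := h0 ▸ le_max_right k₀ P.toReal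
        have h2 : P.toReal = 0 := le_antisymm h1 ENNReal.toReal_nonneg
        exact ((ENNReal.toReal_eq_zero_iff P).mp h2).resolve_right hP_top
      have hv0 : v =ᵐ[μ] 0 :=
        (eLpNorm_eq_zero_iff hvp.1 hp0).mp (by rw [← hP_def]; exact hPz)
      have hz : φ k₁ = 0 := by
        have hnull : μ {ω | v ω ≠ 0} = 0 := by
          have := ae_iff.mp hv0
          simpa using this
        refine measure_mono_null ?_ hnull
        intro ω hω
        simp only [Set.mem_setOf_eq] at hω ⊢
        intro hvz
        rw [hvz, abs_zero] at hω
        linarith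
      exact hz.le.trans zero_le_one
    · have hε0 : ENNReal.ofReal k₁ ≠ 0 := by
        simp only [ne_eq, ENNReal.ofReal_eq_zero, not_le]
        exact h0
      have hsub : {ω | k₁ < |v ω|} ⊆ {ω | ENNReal.ofReal k₁ ≤ (‖v ω‖₊ : ℝ≥0∞)} := by
        intro ω hω
        simp only [Set.mem_setOf_eq] at hω ⊢
        rw [← enorm_eq_nnnorm, ← ofReal_norm, Real.norm_eq_abs]
        exact ENNReal.ofReal_le_ofReal hω.le
      have hPle : P ≤ ENNReal.ofReal k₁ := by
        conv_lhs => rw [← ENNReal.ofReal_toReal hP_top]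
        exact ENNReal.ofReal_le_ofReal (le_max_right _ _)
      calc φ k₁ ≤ μ {ω | ENNReal.ofReal k₁ ≤ (‖v ω‖₊ : ℝ≥0∞)} := measure_mono hsub
        _ ≤ (ENNReal.ofReal k₁)⁻¹ ^ p.toReal * P ^ p.toReal :=
            meas_ge_le_mul_pow_eLpNorm_enorm μ hp0 hptop hvp.1 hε0 (fun h => absurd h ENNReal.ofReal_ne_top)
        _ ≤ (ENNReal.ofReal k₁)⁻¹ ^ p.toReal * (ENNReal.ofReal k₁) ^ p.toReal := by
            gcongr
        _ = ((ENNReal.ofReal k₁)⁻¹ * ENNReal.ofReal k₁) ^ p.toReal :=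
            (ENNReal.mul_rpow_of_nonneg _ _ ENNReal.toReal_nonneg).symm
        _ = 1 := by
            rw [ENNReal.inv_mul_cancel hε0 ENNReal.ofReal_ne_top, ENNReal.one_rpow]
  set A : ℝ≥0∞ := ENNReal.ofReal α * M with hA_def
  have hA_top : A ≠ ∞ := ENNReal.mul_ne_top ENNReal.ofReal_ne_top hM_top
  -- the key one-step decay estimate
  have hstep : ∀ k h : ℝ, k₁ ≤ k → k < h →
      φ h ≤ (A / ENNReal.ofReal (h - k)) ^ qr * φ k ^ β := by
    intro k h hk hkh
    have hk0 : 0 ≤ k := le_trans hk₁0 hk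
    set w : Ω → ℝ := fun ω => v ω - min k (max (-k) (v ω)) with hw_def
    have hw_aesm : AEStronglyMeasurable w μ :=
      (hv.1.aemeasurable.sub
        (aemeasurable_const.min (aemeasurable_const.max hv.1.aemeasurable))).aestronglyMeasurable
    set N : ℝ≥0∞ := eLpNorm w q μ with hN_def
    have hN_le : N ≤ eLpNorm v q μ := by
      refine eLpNorm_mono fun ω => ?_
      simpa [Real.norm_eq_abs] using shr_abs_le (v := v ω) hk0
    have hN_top : N ≠ ∞ := (lt_of_le_of_lt hN_le hv.2).ne
    have hsub : {ω | h < |v ω|} ⊆ {ω | ENNReal.ofReal (h - k) ≤ (‖w ω‖₊ : ℝ≥0∞)} := by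
      intro ω hω
      simp only [Set.mem_setOf_eq] at hω ⊢
      rw [← enorm_eq_nnnorm, ← ofReal_norm, Real.norm_eq_abs]
      exact ENNReal.ofReal_le_ofReal (shr_lower hkh.le hk0 hω)
    have cheb : ENNReal.ofReal (h - k) ^ qr * φ h ≤ N ^ qr := by
      refine le_trans ?_ (mul_meas_ge_le_pow_eLpNorm' μ hq0 hq2 hw_aesm (ENNReal.ofReal (h - k)))
      exact mul_le_mul_right (measure_mono hsub) _
    -- Hölder step
    obtain ⟨v', hv'meas, hvv'⟩ := hv.1
    have hsetae : {ω | k < |v' ω|} =ᵐ[μ] {ω | k < |v ω|} := by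
      refine eventuallyEq_set.mpr ?_
      filter_upwards [hvv'] with ω hω
      simp [hω]
    have hms : MeasurableSet {ω | k < |v' ω|} :=
      measurableSet_lt measurable_const hv'meas.measurable.abs
    have hAk_null : NullMeasurableSet {ω | k < |v ω|} μ :=
      hms.nullMeasurableSet.congr hsetae
    set ind : Ω → ℝ := {ω | k < |v ω|}.indicator (fun _ => (1:ℝ)) with hind_def
    have hind_aesm : AEStronglyMeasurable ind μ := by
      refine AEStronglyMeasurable.congr
        (f := {ω | k < |v' ω|}.indicator (fun _ => (1:ℝ)))
        ((stronglyMeasurable_const.indicator hms).aestronglyMeasurable) ?_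
      exact indicator_ae_eq_of_ae_eq_set hsetae
    have hw_ind : ind • w = w := by
      funext ω
      by_cases hω : k < |v ω|
      · simp [hind_def, Set.indicator_of_mem, hω]
      · have hz : w ω = 0 := shr_eq_zero (not_lt.mp hω)
        simp [hind_def, Set.indicator_of_notMem, hω, hz]
    set s' : ℝ≥0∞ := (δq + δr)⁻¹ with hs'_def
    set r : ℝ≥0∞ := δr⁻¹ with hr_def
    have hr0 : r ≠ 0 := by
      rw [hr_def]
      exact ENNReal.inv_ne_zero.mpr hδr_top
    have hr_top : r ≠ ∞ := by
      rw [hr_def]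
      exact ENNReal.inv_ne_top.mpr hδr0
    have hind_norm : eLpNorm ind r μ = φ k ^ ρ := by
      rw [hind_def, eLpNorm_indicator_const₀ hAk_null hr0 hr_top]
      have hrt : r.toReal = ρ⁻¹ := by rw [hr_def, ENNReal.toReal_inv, hρ_def]
      rw [hrt, one_div, inv_inv]
      simp [hφ_def]
    have hs'inv : 1 / s' = δq + δr := by rw [hs'_def, one_div, inv_inv]
    have hrinv : 1 / r = δr := by rw [hr_def, one_div, inv_inv]
    have hexp1 : 1 / (1:ℝ≥0∞) = 1 / s + 1 / s' := by
      rw [hs'inv, ← hδs_def, ← add_assoc, hδr_sum, one_div_one]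
    have hexp2 : 1 / s' = 1 / r + 1 / q := by
      rw [hs'inv, hrinv, ← hδq_def, add_comm]
    have hH1 : eLpNorm (fun ω => u ω * w ω) 1 μ ≤ M * eLpNorm w s' μ := by
      have := eLpNorm_smul_le_mul_eLpNorm (μ := μ) (f := w) (φ := u) (p := s) (q := s') (r := 1) hw_aesm hu.1
        (hpqr := ⟨by simpa only [one_div] using hexp1.symm⟩)
      exact this
    have hH2 : eLpNorm w s' μ ≤ φ k ^ ρ * N := by
      calc eLpNorm w s' μ = eLpNorm (ind • w) s' μ := by rw [hw_ind]
        _ ≤ eLpNorm ind r μ * eLpNorm w q μ :=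
            eLpNorm_smul_le_mul_eLpNorm (p := r) (q := q) (r := s') hw_aesm hind_aesm
              (hpqr := ⟨by simpa only [one_div] using hexp2.symm⟩)
        _ = φ k ^ ρ * N := by rw [hind_norm, hN_def]
    have hI : (∫⁻ ω, ENNReal.ofReal |u ω * w ω| ∂μ) = eLpNorm (fun ω => u ω * w ω) 1 μ := by
      rw [eLpNorm_one_eq_lintegral_enorm]
      refine lintegral_congr fun ω => ?_
      rw [← Real.norm_eq_abs, ofReal_norm]
    have hyp1 := (hhyp k (le_trans (le_max_left _ _) hk)).1
    have hNN : N * N ≤ (A * φ k ^ ρ) * N := by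
      calc N * N = N ^ 2 := (pow_two N).symm
        _ ≤ ENNReal.ofReal α * (∫⁻ ω, ENNReal.ofReal |u ω * w ω| ∂μ) := hyp1
        _ ≤ ENNReal.ofReal α * (M * (φ k ^ ρ * N)) := by
            rw [hI]
            exact mul_le_mul_right (le_trans hH1 (mul_le_mul_right hH2 M)) _
        _ = (A * φ k ^ ρ) * N := by rw [hA_def]; ring
    by_cases hN0 : N = 0
    · have hzero : ENNReal.ofReal (h - k) ^ qr * φ h = 0 := by
        refine le_antisymm ?_ zero_le
        rw [← ENNReal.zero_rpow_of_pos hqr0, ← hN0]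
        exact cheb
      have hE0 : ENNReal.ofReal (h - k) ^ qr ≠ 0 :=
        (ENNReal.rpow_pos (ENNReal.ofReal_pos.mpr (by linarith)) ENNReal.ofReal_ne_top).ne'
      have hφh : φ h = 0 := by
        rcases mul_eq_zero.mp hzero with hc | hc
        · exact absurd hc hE0
        · exact hc
      simp [hφh]
    · have hN_le2 : N ≤ A * φ k ^ ρ := (ENNReal.mul_le_mul_iff_left hN0 hN_top).mp hNN
      have hE0 : ENNReal.ofReal (h - k) ^ qr ≠ 0 :=
        (ENNReal.rpow_pos (ENNReal.ofReal_pos.mpr (by linarith)) ENNReal.ofReal_ne_top).ne'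
      have hE_top : ENNReal.ofReal (h - k) ^ qr ≠ ∞ :=
        ENNReal.rpow_ne_top_of_nonneg hqr0.le ENNReal.ofReal_ne_top
      have h1 : φ h ≤ N ^ qr / ENNReal.ofReal (h - k) ^ qr :=
        (ENNReal.le_div_iff_mul_le (Or.inl hE0) (Or.inl hE_top)).mpr
          (by rw [mul_comm]; exact cheb)
      calc φ h ≤ N ^ qr / ENNReal.ofReal (h - k) ^ qr := h1
        _ ≤ (A * φ k ^ ρ) ^ qr / ENNReal.ofReal (h - k) ^ qr := by gcongr
        _ = (A / ENNReal.ofReal (h - k)) ^ qr * φ k ^ β := by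
            rw [ENNReal.mul_rpow_of_nonneg _ _ hqr0.le, ← ENNReal.rpow_mul, ← hβ_def,
              ENNReal.div_rpow_of_nonneg _ _ hqr0.le, div_eq_mul_inv, div_eq_mul_inv,
              mul_right_comm]
  -- wrap up
  by_cases hAz : A = 0
  · have hφh : ∀ h : ℝ, k₁ < h → φ h = 0 := by
      intro h hh
      have := hstep k₁ h le_rfl hh
      simpa [hAz, ENNReal.zero_div, ENNReal.zero_rpow_of_pos hqr0] using this
    have hnull : μ {ω | k₁ < |v ω|} = 0 := by
      have hsub : {ω | k₁ < |v ω|} ⊆ ⋃ n : ℕ, {ω | k₁ + ((n:ℝ) + 1)⁻¹ < |v ω|} := by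
        intro ω hω
        simp only [Set.mem_setOf_eq] at hω
        obtain ⟨n, hn⟩ := exists_nat_one_div_lt (sub_pos.mpr hω)
        rw [one_div] at hn
        exact Set.mem_iUnion.mpr ⟨n, by simp only [Set.mem_setOf_eq]; linarith⟩
      refine measure_mono_null hsub (measure_iUnion_null fun n => hφh _ ?_)
      have : (0:ℝ) < ((n:ℝ) + 1)⁻¹ := by positivity
      linarith
    have hae : ∀ᵐ ω ∂μ, ‖v ω‖ ≤ k₁ := by
      rw [ae_iff]
      convert hnull using 2
      ext ω
      simp [Real.norm_eq_abs, not_le]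
    have hbound : eLpNorm v ∞ μ ≤ ENNReal.ofReal k₁ := by
      rw [eLpNorm_exponent_top]
      exact eLpNormEssSup_le_of_ae_bound hae
    refine ⟨⟨hv.1, lt_of_le_of_lt hbound ENNReal.ofReal_lt_top⟩, ?_⟩
    exact le_trans hbound (le_trans hofk₁ le_self_add)
  · have hiter := stampacchia_iter φ hmono hAz hA_top hqr0 hβ hφk₁ hstep
    set d : ℝ := A.toReal * 2 ^ (β / (β - 1)) with hd_def
    have hd0 : 0 ≤ d := by positivity
    have hae : ∀ᵐ ω ∂μ, ‖v ω‖ ≤ k₁ + d := by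
      rw [ae_iff]
      convert hiter using 2
      ext ω
      simp [hφ_def, Real.norm_eq_abs, not_le]
    have hbound : eLpNorm v ∞ μ ≤ ENNReal.ofReal (k₁ + d) := by
      rw [eLpNorm_exponent_top]
      exact eLpNormEssSup_le_of_ae_bound hae
    refine ⟨⟨hv.1, lt_of_le_of_lt hbound ENNReal.ofReal_lt_top⟩, ?_⟩
    refine le_trans hbound ?_
    rw [ENNReal.ofReal_add hk₁0 hd0]
    refine add_le_add hofk₁ (le_of_eq ?_)
    have hAtr : A.toReal = α * M.toReal := by
      rw [hA_def, ENNReal.toReal_mul, ENNReal.toReal_ofReal hα]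
    have hc2 : (0:ℝ) < 2 ^ (β / (β - 1)) := by positivity
    rw [hd_def, hAtr, show α * M.toReal * 2 ^ (β / (β - 1))
        = (2 ^ (β / (β - 1)) * α) * M.toReal by ring,
      ENNReal.ofReal_mul (mul_nonneg hc2.le hα), ENNReal.ofReal_toReal hM_top, hM_def]
end
end

section
/- Let V be a real separable Hilbert space, K ⊂ V a nonempty closed convex set, and A : V → V* a continuous linear operator with ⟨Av, v⟩_V ≥ c‖v‖_V² for all v ∈ V and some c > 0. Let S : V* → V be the (well-defined) solution map z ↦ w of the variational inequality w ∈ K, ⟨Aw − z, v − w⟩_V ≥ 0 for all v ∈ K. Then for every u ∈ V* and every G ∈ ∂_B^{sw}S(u), one has ⟨z, Gz⟩_V ≥ 0 for all z ∈ V*, where ⟨z, Gz⟩_V denotes the duality pairing of z ∈ V* with Gz ∈ V. -/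
open Filter Topology MeasureTheory ENNReal NNReal

noncomputable section

/-- Monotonicity-type property of the strong-weak Bouligand differential of
the solution map `S : V* → V` of the variational inequality
`w ∈ K`, `⟨Aw - z, v - w⟩_V ≥ 0` for all `v ∈ K`: every `G ∈ ∂_B^{sw}S(u)` satisfies
`⟨z, Gz⟩_V ≥ 0` for all `z ∈ V*`. -/
theorem bouligandSW_of_vi_solution_map_nonneg
    {V : Type*} [NormedAddCommGroup V] [InnerProductSpace ℝ V] [CompleteSpace V]
    [TopologicalSpace.SeparableSpace V]
    (K : Set V) (hK_ne : K.Nonempty) (hK_cl : IsClosed K) (hK_cv : Convex ℝ K)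
    (A : V →L[ℝ] V →L[ℝ] ℝ) (c : ℝ) (hc : 0 < c)
    (hcoer : ∀ v : V, c * ‖v‖ ^ 2 ≤ A v v)
    (S : (V →L[ℝ] ℝ) → V)
    (hS : ∀ z : V →L[ℝ] ℝ, S z ∈ K ∧ ∀ v ∈ K, 0 ≤ A (S z) (v - S z) - z (v - S z))
    (u : V →L[ℝ] ℝ) (G : (V →L[ℝ] ℝ) →L[ℝ] V) (hG : G ∈ BouligandSW S u)
    (z : V →L[ℝ] ℝ) :
    0 ≤ z (G z) := by
  obtain ⟨xn, Gn, hGn, hxn, hWOT⟩ := hG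
  -- monotonicity of S
  have mono : ∀ z₁ z₂ : V →L[ℝ] ℝ, 0 ≤ (z₁ - z₂) (S z₁ - S z₂) := by
    intro z₁ z₂
    have h1 := (hS z₁).2 (S z₂) (hS z₂).1
    have h2 := (hS z₂).2 (S z₁) (hS z₁).1
    have hA := hcoer (S z₁ - S z₂)
    have hn : (0:ℝ) ≤ c * ‖S z₁ - S z₂‖ ^ 2 :=
      mul_nonneg hc.le (by positivity)
    simp only [map_sub, ContinuousLinearMap.sub_apply] at h1 h2 hA ⊢
    linarith
  have key : ∀ n, 0 ≤ z ((Gn n) z) := by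
    intro n
    have htend := hGn n z
    have htend2 : Tendsto (fun t : ℝ => z ((1 / t) • (S (xn n + t • z) - S (xn n))))
        (𝓝[>] (0:ℝ)) (𝓝 (z ((Gn n) z))) :=
      (z.continuous.tendsto _).comp htend
    refine ge_of_tendsto htend2 ?_
    filter_upwards [self_mem_nhdsWithin] with t ht
    have ht' : (0:ℝ) < t := ht
    have hm := mono (xn n + t • z) (xn n)
    simp only [add_sub_cancel_left, ContinuousLinearMap.smul_apply, smul_eq_mul] at hm
    have : 0 ≤ z (S (xn n + t • z) - S (xn n)) := nonneg_of_mul_nonneg_right hm ht'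
    rw [_root_.map_smul, smul_eq_mul]
    positivity
  have htend3 := hWOT z z
  exact ge_of_tendsto htend3 (Eventually.of_forall key)
end
end
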